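/- arXiv:2109.11422 — 9 statements merged into one kernel-verified Lean document; each statement's English description precedes it below -/
import Mathlib

section
/- For the single reaction A + B → C with initial concentrations a₀, b₀ of A and B and zero C, the unique static state reachable via line-segment paths has concentration of C equal to min(a₀, b₀), concentration of A equal to a₀ − min(a₀, b₀), and concentration of B equal to b₀ − min(a₀, b₀). -/
/-- A chemical reaction network: reactant and product stoichiometries per reaction. -/
structure CRN (S R : Type) where
  reactants : R → S → ℕ
  products : R → S → ℕ

namespace CRN

variable {S R : Type} [Fintype S] [Fintype R]

/-- Net change of species `s` by one unit of reaction `r`. -/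
def net (C : CRN S R) (r : R) (s : S) : ℝ :=
  (C.products r s : ℝ) - (C.reactants r s : ℝ)

/-- A flux vector `u` is applicable at state `a` if it is nonnegative and every
reaction with positive flux has all its reactants positive in `a`. -/
def Applicable (C : CRN S R) (u : R → ℝ) (a : S → ℝ) : Prop :=
  (∀ r, 0 ≤ u r) ∧ ∀ r, 0 < u r → ∀ s, 0 < C.reactants r s → 0 < a s

/-- Straight-line reachability via a given flux vector: `b = M u + a`,
with `u` applicable at `a` and `b` a valid (nonnegative) state. -/
def StepWith (C : CRN S R) (u : R → ℝ) (a b : S → ℝ) : Prop :=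
  C.Applicable u a ∧ (∀ s, 0 ≤ b s) ∧ ∀ s, b s = a s + ∑ r, u r * C.net r s

/-- Straight-line reachability. -/
def Step (C : CRN S R) (a b : S → ℝ) : Prop := ∃ u, C.StepWith u a b

/-- Line-segment reachability: reflexive transitive closure of straight-line steps. -/
def Reach (C : CRN S R) : (S → ℝ) → (S → ℝ) → Prop := Relation.ReflTransGen C.Step

/-- A state is static if only the zero flux vector is applicable at it. -/
def Static (C : CRN S R) (b : S → ℝ) : Prop :=
  ∀ u, C.Applicable u b → u = 0

/-- Non-competitive: every species strictly decreased by some reaction is a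
reactant in only that reaction. -/
def NonCompetitive (C : CRN S R) : Prop :=
  ∀ r s, C.products r s < C.reactants r s → ∀ r', 0 < C.reactants r' s → r' = r

/-- A finite line-segment path of length `n`. -/
structure FinPath (C : CRN S R) (n : ℕ) where
  states : Fin (n+1) → S → ℝ
  flux : Fin n → R → ℝ
  valid : ∀ i : Fin n, C.StepWith (flux i) (states i.castSucc) (states i.succ)

end CRN

/-- For the single reaction `A + B → C` from initial state `(a₀, b₀, 0)`, the
state `(a₀ - min a₀ b₀, b₀ - min a₀ b₀, min a₀ b₀)` is the unique line-segment
reachable static state. -/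
theorem stmt0 (a0 b0 : ℝ) (ha : 0 ≤ a0) (hb : 0 ≤ b0) :
    let C : CRN (Fin 3) (Fin 1) := ⟨![![1, 1, 0]], ![![0, 0, 1]]⟩
    let a : Fin 3 → ℝ := ![a0, b0, 0]
    let b : Fin 3 → ℝ := ![a0 - min a0 b0, b0 - min a0 b0, min a0 b0]
    C.Reach a b ∧ C.Static b ∧ ∀ c, C.Reach a c → C.Static c → c = b := by
  intro C a b
  have hnet0 : C.net 0 0 = -1 := by simp [CRN.net, C]
  have hnet1 : C.net 0 1 = -1 := by simp [CRN.net, C]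
  have hnet2 : C.net 0 2 = 1 := by simp [CRN.net, C]
  have hmin_a : min a0 b0 ≤ a0 := min_le_left _ _
  have hmin_b : min a0 b0 ≤ b0 := min_le_right _ _
  have hmin_nn : 0 ≤ min a0 b0 := le_min ha hb
  -- Reach a b via one step
  have hreach : C.Reach a b := by
    refine Relation.ReflTransGen.single ⟨fun _ => min a0 b0, ?_, ?_, ?_⟩
    · constructor
      · intro r; exact hmin_nn
      · intro r hr s hs
        fin_cases r
        fin_cases s
        · simpa [a] using lt_of_lt_of_le hr hmin_a
        · simpa [a] using lt_of_lt_of_le hr hmin_b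
        · simp [C] at hs
    · intro s
      fin_cases s
      · simpa [b] using sub_nonneg.2 hmin_a
      · simpa [b] using sub_nonneg.2 hmin_b
      · simpa [b] using hmin_nn
    · intro s
      fin_cases s <;> simp [a, b, hnet0, hnet1, hnet2, Fin.sum_univ_succ] <;> ring
  refine ⟨hreach, ?_, ?_⟩
  · -- static
    intro u hu
    funext r
    fin_cases r
    by_contra h
    have hpos : 0 < u 0 := lt_of_le_of_ne (hu.1 0) (by simpa using Ne.symm h)
    have h0 : 0 < b 0 := hu.2 0 hpos 0 (by simp [C])
    have h1 : 0 < b 1 := hu.2 0 hpos 1 (by simp [C])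
    simp only [b, Matrix.cons_val_zero, Matrix.cons_val_one, Matrix.head_cons,
      sub_pos] at h0 h1
    rcases min_cases a0 b0 with ⟨he, _⟩ | ⟨he, _⟩ <;> rw [he] at h0 h1 <;> linarith
  · -- uniqueness
    intro c hrc hst
    -- invariant
    have hinv : ∀ d, C.Reach a d →
        (∃ t : ℝ, 0 ≤ t ∧ d 0 = a0 - t ∧ d 1 = b0 - t ∧ d 2 = t) ∧ ∀ s, 0 ≤ d s := by
      intro d hd
      induction hd with
      | refl =>
        refine ⟨⟨0, le_refl 0, by simp [a], by simp [a], by simp [a]⟩, ?_⟩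
        intro s; fin_cases s <;> simp [a, ha, hb]
      | tail hxy hyz ih =>
        obtain ⟨⟨t, ht, h0, h1, h2⟩, _⟩ := ih
        obtain ⟨u, hu, hnn, heq⟩ := hyz
        refine ⟨⟨t + u 0, by have := hu.1 0; linarith, ?_, ?_, ?_⟩, hnn⟩
        · rw [heq 0]; simp [Fin.sum_univ_succ, hnet0, h0]; try ring
        · rw [heq 1]; simp [Fin.sum_univ_succ, hnet1, h1]; try ring
        · rw [heq 2]; simp [Fin.sum_univ_succ, hnet2, h2]; try ring
    obtain ⟨⟨t, ht, h0, h1, h2⟩, hnn⟩ := hinv c hrc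
    -- static implies c 0 = 0 or c 1 = 0
    have hz : c 0 = 0 ∨ c 1 = 0 := by
      by_contra h
      push_neg at h
      have hc0 : 0 < c 0 := lt_of_le_of_ne (hnn 0) (Ne.symm h.1)
      have hc1 : 0 < c 1 := lt_of_le_of_ne (hnn 1) (Ne.symm h.2)
      have := hst (fun _ => 1) ⟨fun _ => zero_le_one, ?_⟩
      · exact one_ne_zero (congrFun this 0)
      · intro r _ s hs
        fin_cases r; fin_cases s
        · exact hc0
        · exact hc1
        · simp [C] at hs
    have hta : t ≤ a0 := by have := hnn 0; rw [h0] at this; linarith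
    have htb : t ≤ b0 := by have := hnn 1; rw [h1] at this; linarith
    have htm : t = min a0 b0 := by
      rcases hz with hz | hz
      · rw [h0] at hz
        have : t = a0 := by linarith
        rw [this]; exact (min_eq_left (by linarith)).symm
      · rw [h1] at hz
        have : t = b0 := by linarith
        rw [this]; exact (min_eq_right (by linarith)).symm
    funext s
    fin_cases s <;> simp only [b] <;> rw [← htm]
    · simpa using h0
    · simpa using h1
    · simpa using h2
end

section
/- Consider the ReLU CRN with species X⁺, X⁻, M, Y⁺, Y⁻ and reactions X⁺ → M + Y⁺ and M + X⁻ → Y⁻. Starting from a state with concentrations x⁺ of X⁺, x⁻ of X⁻, and zero for M, Y⁺, Y⁻, there is a line-segment reachable static state in which y⁺ − y⁻ = max(x⁺ − x⁻, 0), where y⁺, y⁻ are the final concentrations of Y⁺, Y⁻. -/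
/-- The ReLU CRN: species `X⁺, X⁻, M, Y⁺, Y⁻` (indices 0..4), reactions
`X⁺ → M + Y⁺` and `M + X⁻ → Y⁻`. From `(x⁺, x⁻, 0, 0, 0)` there is a
line-segment reachable static state with `y⁺ - y⁻ = max (x⁺ - x⁻) 0`. -/
theorem stmt1 (xp xm : ℝ) (hxp : 0 ≤ xp) (hxm : 0 ≤ xm) :
    let C : CRN (Fin 5) (Fin 2) :=
      ⟨![![1, 0, 0, 0, 0], ![0, 1, 1, 0, 0]],
        ![![0, 0, 1, 1, 0], ![0, 0, 0, 0, 1]]⟩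
    let a : Fin 5 → ℝ := ![xp, xm, 0, 0, 0]
    ∃ b, C.Reach a b ∧ C.Static b ∧ b 3 - b 4 = max (xp - xm) 0 := by
  intro C a
  set m := min xp xm with hm
  have hm0 : 0 ≤ m := le_min hxp hxm
  have hmxp : m ≤ xp := min_le_left _ _
  have hmxm : m ≤ xm := min_le_right _ _
  refine ⟨![0, xm - m, xp - m, xp, m], ?_, ?_, ?_⟩
  · -- Reach via two steps
    have step1 : C.Step a ![0, xm, xp, xp, 0] := by
      refine ⟨![xp, 0], ⟨⟨?_, ?_⟩, ?_, ?_⟩⟩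
      · intro r; fin_cases r <;> simp [hxp]
      · intro r hr s hs
        fin_cases r
        · fin_cases s <;> simp_all [C, a] <;> linarith
        · simp at hr
      · intro s; fin_cases s <;> simp [hxp] <;> linarith
      · intro s; fin_cases s <;>
          simp [C, a, CRN.net, Fin.sum_univ_two] <;> ring
    have step2 : C.Step ![0, xm, xp, xp, 0] ![0, xm - m, xp - m, xp, m] := by
      refine ⟨![0, m], ⟨⟨?_, ?_⟩, ?_, ?_⟩⟩
      · intro r; fin_cases r <;> simp [hm0]
      · intro r hr s hs
        fin_cases r
        · simp at hr
        · fin_cases s <;> simp_all [C] <;>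
            first
            | exact hr.trans_le hmxm
            | exact hr.trans_le hmxp
      · intro s; fin_cases s <;> simp [hm0] <;> linarith
      · intro s; fin_cases s <;>
          simp [C, CRN.net, Fin.sum_univ_two] <;> ring
    exact (Relation.ReflTransGen.single step1).tail step2
  · -- Static
    intro u ⟨hu0, hu⟩
    funext r
    fin_cases r
    · by_contra h
      have := hu 0 (lt_of_le_of_ne (hu0 0) (Ne.symm h)) 0 (by simp [C])
      simp at this
    · by_contra h
      have h1 := hu 1 (lt_of_le_of_ne (hu0 1) (Ne.symm h)) 1 (by simp [C])
      have h2 := hu 1 (lt_of_le_of_ne (hu0 1) (Ne.symm h)) 2 (by simp [C])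
      simp at h1 h2
      rcases min_cases xp xm with ⟨h, _⟩ | ⟨h, _⟩ <;> simp [hm, h] at h1 h2 <;> linarith
  · show xp - m = max (xp - xm) 0
    rcases le_total xp xm with h | h
    · rw [hm, min_eq_left h, max_eq_right (by linarith)]; ring
    · rw [hm, min_eq_right h, max_eq_left (by linarith)]
end

section
/- Consider the max-computing CRN with reactions (1) X₁ → Y + A₁, (2) X₂ → Y + A₂, (3) A₁ + A₂ → M, (4) Y + M → ∅ (annihilation with no products). From the initial state with concentrations x₁ of X₁, x₂ of X₂ and all other species zero, there is a line-segment reachable static state in which the concentration of Y equals max(x₁, x₂). -/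
namespace CRN

theorem static_of_forall_exists_reactant_nonpos {S R : Type} (C : CRN S R) {b : S → ℝ}
    (h : ∀ r, ∃ s, 0 < C.reactants r s ∧ b s ≤ 0) : C.Static b := by
  rintro u ⟨hu_nonneg, hu_app⟩
  funext r
  obtain ⟨s, hs, hbs⟩ := h r
  by_contra hur
  exact (hu_app r ((hu_nonneg r).lt_of_ne' hur) s hs).not_ge hbs

theorem step_of_single_reaction {S R : Type} [Fintype R] [DecidableEq R] (C : CRN S R)
    {a b : S → ℝ} (r : R) {t : ℝ} (ht : 0 ≤ t)
    (hr : 0 < t → ∀ s, 0 < C.reactants r s → 0 < a s) (hb_nonneg : ∀ s, 0 ≤ b s)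
    (hb : ∀ s, b s = a s + t * C.net r s) : C.Step a b := by
  refine ⟨Pi.single r t, ⟨fun r' => ?_, fun r' hr' => ?_⟩, hb_nonneg, fun s => ?_⟩
  · rcases eq_or_ne r' r with rfl | h
    · simpa using ht
    · simp [h]
  · rcases eq_or_ne r' r with rfl | h
    · exact hr (by simpa using hr')
    · simp [h] at hr'
  · simp [hb, Pi.single_apply]

end CRN

/-- Species are indexed `X₁, X₂, Y, A₁, A₂, M`. -/
def maxCRN : CRN (Fin 6) (Fin 4) :=
  ⟨![![1, 0, 0, 0, 0, 0], ![0, 1, 0, 0, 0, 0],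
     ![0, 0, 0, 1, 1, 0], ![0, 0, 1, 0, 0, 1]],
    ![![0, 0, 1, 1, 0, 0], ![0, 0, 1, 0, 1, 0],
      ![0, 0, 0, 0, 0, 1], ![0, 0, 0, 0, 0, 0]]⟩

namespace maxCRN

def finalState (x1 x2 : ℝ) : Fin 6 → ℝ :=
  ![0, 0, x1 + x2 - min x1 x2, x1 - min x1 x2, x2 - min x1 x2, 0]

theorem reach_finalState {x1 x2 : ℝ} (h1 : 0 ≤ x1) (h2 : 0 ≤ x2) :
    maxCRN.Reach ![x1, x2, 0, 0, 0, 0] (finalState x1 x2) := by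
  have hm1 : min x1 x2 ≤ x1 := min_le_left _ _
  have hm2 : min x1 x2 ≤ x2 := min_le_right _ _
  have hm0 : 0 ≤ min x1 x2 := le_min h1 h2
  have fire_X₁ : maxCRN.Step ![x1, x2, 0, 0, 0, 0] ![0, x2, x1, x1, 0, 0] :=
    maxCRN.step_of_single_reaction 0 h1 (fun ht s hs => by fin_cases s <;> simp_all [maxCRN])
      (fun s => by fin_cases s <;> simp [h1, h2])
      (fun s => by fin_cases s <;> simp [CRN.net, maxCRN])
  have fire_X₂ : maxCRN.Step ![0, x2, x1, x1, 0, 0] ![0, 0, x1 + x2, x1, x2, 0] :=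
    maxCRN.step_of_single_reaction 1 h2 (fun ht s hs => by fin_cases s <;> simp_all [maxCRN])
      (fun s => by fin_cases s <;> simp [h1, h2, add_nonneg])
      (fun s => by fin_cases s <;> simp [CRN.net, maxCRN])
  have fire_A : maxCRN.Step ![0, 0, x1 + x2, x1, x2, 0]
      ![0, 0, x1 + x2, x1 - min x1 x2, x2 - min x1 x2, min x1 x2] :=
    maxCRN.step_of_single_reaction 2 hm0 (fun ht s hs => by fin_cases s <;> simp_all [maxCRN])
      (fun s => by fin_cases s <;> simp [hm1, hm2, hm0, add_nonneg, h1, h2])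
      (fun s => by fin_cases s <;> simp [CRN.net, maxCRN] <;> ring)
  have fire_YM : maxCRN.Step ![0, 0, x1 + x2, x1 - min x1 x2, x2 - min x1 x2, min x1 x2]
      (finalState x1 x2) :=
    maxCRN.step_of_single_reaction 3 hm0
      (fun ht s hs => by fin_cases s <;> simp_all [maxCRN]; linarith)
      (fun s => by fin_cases s <;> simp [finalState, hm1, hm2, h1])
      (fun s => by fin_cases s <;> simp [CRN.net, maxCRN, finalState]; ring)
  exact .head fire_X₁ (.head fire_X₂ (.head fire_A (.single fire_YM)))

theorem static_finalState (x1 x2 : ℝ) : maxCRN.Static (finalState x1 x2) := by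
  refine maxCRN.static_of_forall_exists_reactant_nonpos fun r => ?_
  fin_cases r
  · exact ⟨0, by simp [maxCRN, finalState]⟩
  · exact ⟨1, by simp [maxCRN, finalState]⟩
  · rcases le_total x1 x2 with h | h
    · exact ⟨3, by simp [maxCRN, finalState, h]⟩
    · exact ⟨4, by simp [maxCRN, finalState, h]⟩
  · exact ⟨5, by simp [maxCRN, finalState]⟩

theorem finalState_Y (x1 x2 : ℝ) : finalState x1 x2 2 = max x1 x2 := by
  show x1 + x2 - min x1 x2 = max x1 x2
  linarith [min_add_max x1 x2]

end maxCRN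

/-- The max-computing CRN: species `X₁, X₂, Y, A₁, A₂, M` (indices 0..5),
reactions `X₁ → Y + A₁`, `X₂ → Y + A₂`, `A₁ + A₂ → M`, `Y + M → ∅`.
From `(x₁, x₂, 0, 0, 0, 0)` there is a line-segment reachable static state
whose `Y`-concentration equals `max x₁ x₂`. -/
theorem stmt2 (x1 x2 : ℝ) (h1 : 0 ≤ x1) (h2 : 0 ≤ x2) :
    let C : CRN (Fin 6) (Fin 4) :=
      ⟨![![1, 0, 0, 0, 0, 0], ![0, 1, 0, 0, 0, 0],
         ![0, 0, 0, 1, 1, 0], ![0, 0, 1, 0, 0, 1]],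
        ![![0, 0, 1, 1, 0, 0], ![0, 0, 1, 0, 1, 0],
          ![0, 0, 0, 0, 0, 1], ![0, 0, 0, 0, 0, 0]]⟩
    let a : Fin 6 → ℝ := ![x1, x2, 0, 0, 0, 0]
    ∃ b, C.Reach a b ∧ C.Static b ∧ b 2 = max x1 x2 :=
  ⟨maxCRN.finalState x1 x2, maxCRN.reach_finalState h1 h2, maxCRN.static_finalState x1 x2,
    maxCRN.finalState_Y x1 x2⟩
end

section
/- In a non-competitive CRN, if there is a finite line-segment path p₁ from state a ending in state b, and another path p₂ from a whose total flux through some reaction R strictly exceeds the total flux through R along p₁, then b is not static; i.e., some reaction is applicable at b. -/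
section Aux

variable {S R : Type} [Fintype S] [Fintype R] {C : CRN S R} {n : ℕ}

/-- Flux of step `i`, extended to all naturals. -/
noncomputable def eflux (p : C.FinPath n) : ℕ → R → ℝ :=
  fun i r => if h : i < n then p.flux ⟨i, h⟩ r else 0

/-- State after `j` steps, extended to all naturals. -/
noncomputable def estate (p : C.FinPath n) : ℕ → S → ℝ :=
  fun j => if h : j ≤ n then p.states ⟨j, Nat.lt_succ_of_le h⟩ else p.states (Fin.last n)

lemma estate_zero (p : C.FinPath n) : estate p 0 = p.states 0 := by
  simp only [estate, dif_pos (Nat.zero_le n)]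
  congr 1

lemma estate_last (p : C.FinPath n) : estate p n = p.states (Fin.last n) := by
  simp only [estate, dif_pos (le_refl n)]
  rfl

lemma eflux_nonneg (p : C.FinPath n) (i : ℕ) (r : R) : 0 ≤ eflux p i r := by
  unfold eflux
  split
  · exact (p.valid _).1.1 r
  · exact le_refl 0

lemma estep (p : C.FinPath n) (j : ℕ) (hj : j < n) :
    C.StepWith (eflux p j) (estate p j) (estate p (j + 1)) := by
  have h1 : estate p j = p.states (Fin.castSucc ⟨j, hj⟩) := by
    simp only [estate, dif_pos hj.le]
    rfl
  have h2 : estate p (j + 1) = p.states (Fin.succ ⟨j, hj⟩) := by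
    simp only [estate, dif_pos (Nat.succ_le_of_lt hj)]
    rfl
  have h3 : eflux p j = p.flux ⟨j, hj⟩ := by
    funext r
    simp only [eflux, dif_pos hj]
  rw [h1, h2, h3]
  exact p.valid ⟨j, hj⟩

lemma estate_eq (p : C.FinPath n) (j : ℕ) (hj : j ≤ n) (s : S) :
    estate p j s = estate p 0 s +
      ∑ r, (∑ i ∈ Finset.range j, eflux p i r) * C.net r s := by
  induction j with
  | zero => simp
  | succ j ih =>
    have hj' : j < n := hj
    have hstep := (estep p j hj').2.2 s
    have hsum : ∑ r, (∑ i ∈ Finset.range (j + 1), eflux p i r) * C.net r s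
        = ∑ r, (∑ i ∈ Finset.range j, eflux p i r) * C.net r s
          + ∑ r, eflux p j r * C.net r s := by
      rw [← Finset.sum_add_distrib]
      apply Finset.sum_congr rfl
      intro r _
      rw [Finset.sum_range_succ]
      ring
    rw [hsum]
    rw [hstep, ih hj'.le]
    ring

lemma eflux_total (p : C.FinPath n) (r : R) :
    ∑ i ∈ Finset.range n, eflux p i r = ∑ i : Fin n, p.flux i r := by
  rw [Finset.sum_range fun i => eflux p i r]
  apply Finset.sum_congr rfl
  intro i _
  simp only [eflux, dif_pos i.isLt, Fin.eta]

end Aux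

/-- In a non-competitive CRN, if a finite path `p₁` from `a` ends in `b`, and
another path `p₂` from `a` has strictly more total flux through some reaction
`r0` than `p₁`, then `b` is not static. -/
theorem stmt4 {S R : Type} [Fintype S] [Fintype R]
    (C : CRN S R) (hnc : C.NonCompetitive)
    {n m : ℕ} (p1 : C.FinPath n) (p2 : C.FinPath m)
    (hstart : p1.states 0 = p2.states 0)
    (r0 : R) (hflux : ∑ i, p1.flux i r0 < ∑ i, p2.flux i r0) :
    ¬ C.Static (p1.states (Fin.last n)) := by
  classical
  intro hstatic
  set a : S → ℝ := p2.states 0 with ha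
  set b : S → ℝ := p1.states (Fin.last n) with hbdef
  set F1 : R → ℝ := fun r => ∑ i : Fin n, p1.flux i r with hF1
  have hF1nonneg : ∀ r, 0 ≤ F1 r := fun r =>
    Finset.sum_nonneg fun i _ => (p1.valid i).1.1 r
  -- the endpoint equation for p1
  have hb : ∀ s, b s = a s + ∑ r, F1 r * C.net r s := by
    intro s
    have := estate_eq p1 n le_rfl s
    rw [estate_zero, estate_last, hstart] at this
    rw [hbdef, this]
    congr 1
    apply Finset.sum_congr rfl
    intro r _
    rw [eflux_total]
  -- since b is static, every reaction has a non-positive reactant at b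
  have hAstar : ∀ r : R, ∃ s, 0 < C.reactants r s ∧ ¬ (0 < b s) := by
    intro r
    by_contra h
    push_neg at h
    have happ : C.Applicable (fun r' => if r' = r then 1 else 0) b := by
      constructor
      · intro r'; by_cases h' : r' = r <;> simp [h']
      · intro r' hr' s hs
        have : r' = r := by by_contra hne; simp [hne] at hr'
        exact h s (this ▸ hs)
    have := congrFun (hstatic _ happ) r
    simp at this
  -- key lemma: at any state reached with flux G ≤ F1, a firing reaction has slack
  have hstar : ∀ (G : R → ℝ), (∀ r, G r ≤ F1 r) → ∀ (u : R → ℝ) (x : S → ℝ),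
      (∀ s, x s = a s + ∑ r, G r * C.net r s) → C.Applicable u x →
      ∀ r, 0 < u r → G r < F1 r := by
    intro G hG u x hx hu r hr
    obtain ⟨s, hs, hbs⟩ := hAstar r
    have hxs : 0 < x s := hu.2 r hr s hs
    have hbs' : b s ≤ 0 := le_of_not_gt hbs
    have hdiff : ∑ r', (F1 r' - G r') * C.net r' s < 0 := by
      have heq : b s - x s = ∑ r', (F1 r' - G r') * C.net r' s := by
        rw [hb s, hx s]
        rw [show ∑ r', (F1 r' - G r') * C.net r' s
            = ∑ r', F1 r' * C.net r' s - ∑ r', G r' * C.net r' s by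
          rw [← Finset.sum_sub_distrib]
          apply Finset.sum_congr rfl
          intro r' _; ring]
        ring
      linarith [heq]
    have hex : ∃ r' ∈ Finset.univ (α := R), (F1 r' - G r') * C.net r' s < 0 := by
      by_contra hc
      push_neg at hc
      have : (0:ℝ) ≤ ∑ r', (F1 r' - G r') * C.net r' s :=
        Finset.sum_nonneg fun r' hr' => hc r' hr'
      linarith
    obtain ⟨r', -, hr'⟩ := hex
    have hfac : 0 ≤ F1 r' - G r' := sub_nonneg.2 (hG r')
    have hnet : C.net r' s < 0 := by nlinarith
    have hplt : C.products r' s < C.reactants r' s := by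
      have : (C.products r' s : ℝ) < (C.reactants r' s : ℝ) := by
        unfold CRN.net at hnet; linarith
      exact_mod_cast this
    have hrr : r = r' := hnc r' s hplt r hs
    subst hrr
    have hfacpos : 0 < F1 r - G r := by
      rcases hfac.lt_or_eq with h | h
      · exact h
      · exfalso; rw [← h, zero_mul] at hr'; exact lt_irrefl 0 hr'
    linarith
  -- main invariant: cumulative flux along p2 never exceeds F1
  have hinv : ∀ j, j ≤ m → ∀ r, (∑ i ∈ Finset.range j, eflux p2 i r) ≤ F1 r := by
    intro j
    induction j with
    | zero => intro _ r; simpa using hF1nonneg r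
    | succ j ih =>
      intro hj r
      have hjm : j < m := hj
      have hG := ih hjm.le
      set G : R → ℝ := fun r => ∑ i ∈ Finset.range j, eflux p2 i r with hGdef
      set u : R → ℝ := eflux p2 j with hudef
      have hstep := estep p2 j hjm
      have hxeq : ∀ s, estate p2 j s = a s + ∑ r', G r' * C.net r' s := by
        intro s
        have := estate_eq p2 j hjm.le s
        rwa [estate_zero] at this
      rw [Finset.sum_range_succ]
      by_contra hcon
      push_neg at hcon
      have hur : 0 < u r := by
        have := hG r
        have := hstep.1.1 r
        linarith
      set T : Finset R := Finset.univ.filter (fun r' => 0 < u r') with hT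
      have hrT : r ∈ T := by simp [hT, hur]
      obtain ⟨rs, hrsT, hmin⟩ :=
        T.exists_min_image (fun r' => (F1 r' - G r') / u r') ⟨r, hrT⟩
      have hurs : 0 < u rs := by simpa [hT] using hrsT
      set t : ℝ := (F1 rs - G rs) / u rs with htdef
      have ht0 : 0 ≤ t := div_nonneg (sub_nonneg.2 (hG rs)) hurs.le
      have ht1 : t < 1 := by
        have h1 : t ≤ (F1 r - G r) / u r := hmin r hrT
        have h2 : (F1 r - G r) / u r < 1 := by
          rw [div_lt_one hur]; linarith
        linarith
      set x' : S → ℝ := fun s => (1 - t) * estate p2 j s + t * estate p2 (j+1) s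
        with hx'def
      have hx'eq : ∀ s, x' s = a s + ∑ r', (G r' + t * u r') * C.net r' s := by
        intro s
        have h1 := hxeq s
        have h2 : estate p2 (j+1) s = a s + ∑ r', (G r' + u r') * C.net r' s := by
          have := estate_eq p2 (j+1) hj s
          rw [estate_zero] at this
          rw [this]
          congr 1
          apply Finset.sum_congr rfl
          intro r' _
          rw [Finset.sum_range_succ]
        have h3 : ∑ r', (G r' + t * u r') * C.net r' s
            = (1 - t) * (∑ r', G r' * C.net r' s)
              + t * (∑ r', (G r' + u r') * C.net r' s) := by
          rw [Finset.mul_sum, Finset.mul_sum, ← Finset.sum_add_distrib]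
          apply Finset.sum_congr rfl
          intro r' _; ring
        rw [hx'def]
        simp only
        rw [h1, h2, h3]
        ring
      have happ' : C.Applicable u x' := by
        refine ⟨hstep.1.1, fun r'' h'' s hsr => ?_⟩
        have h1 : 0 < estate p2 j s := hstep.1.2 r'' h'' s hsr
        have h2 : 0 ≤ estate p2 (j+1) s := hstep.2.1 s
        have h3 : 0 < (1 - t) * estate p2 j s := mul_pos (by linarith) h1
        have h4 : 0 ≤ t * estate p2 (j+1) s := mul_nonneg ht0 h2
        rw [hx'def]
        simp only
        linarith
      have hG'le : ∀ r', G r' + t * u r' ≤ F1 r' := by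
        intro r'
        by_cases h : 0 < u r'
        · have hmem : r' ∈ T := by simp [hT, h]
          have := hmin r' hmem
          have h5 : t * u r' ≤ F1 r' - G r' := by
            rw [← div_mul_cancel₀ (F1 r' - G r') (ne_of_gt h)]
            exact mul_le_mul_of_nonneg_right this h.le
          linarith
        · have h0 : u r' = 0 := le_antisymm (not_lt.1 h) (hstep.1.1 r')
          rw [h0]
          simpa using hG r'
      have hlt := hstar (fun r' => G r' + t * u r') hG'le u x' hx'eq happ' rs hurs
      have heq : G rs + t * u rs = F1 rs := by
        rw [htdef, div_mul_cancel₀ _ (ne_of_gt hurs)]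
        ring
      linarith
  have hfin := hinv m le_rfl r0
  rw [eflux_total] at hfin
  rw [hF1] at hfin
  linarith
end

section
/- In a non-competitive CRN, if a → b and a → c under line-segment reachability and both b and c are static states, then b = c. -/
section Aux

variable {S R : Type} [Fintype S] [Fintype R]

/-- A path from `a` to `x` with the given list of flux vectors. -/
def pathFrom (C : CRN S R) : (S → ℝ) → (S → ℝ) → List (R → ℝ) → Prop
  | a, x, [] => x = a
  | a, x, (u :: L) => ∃ y, C.StepWith u a y ∧ pathFrom C y x L

/-- Total flux of a list of flux vectors. -/
def totalFlux (L : List (R → ℝ)) : R → ℝ := fun r => (L.map (fun u => u r)).sum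

@[simp] lemma totalFlux_nil : totalFlux ([] : List (R → ℝ)) = fun _ => 0 := rfl

@[simp] lemma totalFlux_cons (u : R → ℝ) (L : List (R → ℝ)) (r : R) :
    totalFlux (u :: L) r = u r + totalFlux L r := by
  simp [totalFlux]

lemma reach_path (C : CRN S R) {a x : S → ℝ} (h : C.Reach a x) :
    ∃ L, pathFrom C a x L := by
  induction h using Relation.ReflTransGen.head_induction_on with
  | refl => exact ⟨[], rfl⟩
  | head hstep _ ih =>
      obtain ⟨L, hL⟩ := ih
      obtain ⟨u, hu⟩ := hstep
      exact ⟨u :: L, _, hu, hL⟩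

lemma path_repr (C : CRN S R) :
    ∀ (L : List (R → ℝ)) (a x : S → ℝ), pathFrom C a x L →
      (∀ r, 0 ≤ totalFlux L r) ∧ ∀ s, x s = a s + ∑ r, totalFlux L r * C.net r s := by
  intro L
  induction L with
  | nil =>
      intro a x hx
      cases hx
      constructor
      · intro r; simp
      · intro s; simp
  | cons u L ih =>
      rintro a x ⟨y, hstep, hp⟩
      obtain ⟨hnn, hrep⟩ := ih y x hp
      constructor
      · intro r
        have := hstep.1.1 r
        have := hnn r
        simp only [totalFlux_cons]
        linarith
      · intro s
        have hy := hstep.2.2 s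
        rw [hrep s, hy]
        have : ∑ r, totalFlux (u :: L) r * C.net r s
            = ∑ r, u r * C.net r s + ∑ r, totalFlux L r * C.net r s := by
          rw [← Finset.sum_add_distrib]
          apply Finset.sum_congr rfl
          intro r _
          simp only [totalFlux_cons]
          ring
        rw [this]
        ring

/-- Key single-step lemma: if `b` is static and `b = a + M T` with `T ≥ 0`, then
any step from `a` has flux at most `T`. -/
lemma step_le (C : CRN S R) (hnc : C.NonCompetitive) {b : S → ℝ} (hb : C.Static b)
    {a y : S → ℝ} {T u : R → ℝ} (hT : ∀ r, 0 ≤ T r)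
    (hrep : ∀ s, b s = a s + ∑ r, T r * C.net r s)
    (hstep : C.StepWith u a y) : ∀ r, u r ≤ T r := by
  by_contra h
  push_neg at h
  obtain ⟨r₀, hr₀⟩ := h
  obtain ⟨⟨hu0, happ⟩, hy0, hyeq⟩ := hstep
  classical
  set Supp : Finset R := Finset.univ.filter (fun r => 0 < u r) with hSupp
  have hr₀S : r₀ ∈ Supp := by
    simp only [hSupp, Finset.mem_filter, Finset.mem_univ, true_and]
    exact lt_of_le_of_lt (hT r₀) hr₀
  obtain ⟨rs, hrsS, hrs⟩ := Supp.exists_min_image (fun r => T r / u r) ⟨r₀, hr₀S⟩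
  have hurs : 0 < u rs := by
    simpa [hSupp] using hrsS
  set lam := T rs / u rs with hlam
  have hlam0 : 0 ≤ lam := div_nonneg (hT rs) hurs.le
  have hur₀ : 0 < u r₀ := lt_of_le_of_lt (hT r₀) hr₀
  have hlam1 : lam < 1 := by
    have h1 : lam ≤ T r₀ / u r₀ := hrs r₀ hr₀S
    have h2 : T r₀ / u r₀ < 1 := by
      rw [div_lt_one hur₀]; exact hr₀
    linarith
  have hcoef : ∀ r, 0 ≤ T r - lam * u r := by
    intro r
    by_cases hr : r ∈ Supp
    · have hur : 0 < u r := by simpa [hSupp] using hr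
      have h1 : lam ≤ T r / u r := hrs r hr
      have h2 : lam * u r ≤ (T r / u r) * u r :=
        mul_le_mul_of_nonneg_right h1 hur.le
      rw [div_mul_cancel₀ (T r) hur.ne'] at h2
      linarith
    · have hur : u r = 0 := by
        have h1 := hu0 r
        simp only [hSupp, Finset.mem_filter, Finset.mem_univ, true_and, not_lt] at hr
        linarith
      simp [hur, hT r]
  have hcrs : T rs - lam * u rs = 0 := by
    rw [hlam, div_mul_cancel₀ (T rs) hurs.ne']
    ring
  -- all reactants of `rs` are positive at `b`
  have hbpos : ∀ s, 0 < C.reactants rs s → 0 < b s := by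
    intro s hs
    have has : 0 < a s := happ rs hurs s hs
    have hz : 0 < a s + lam * ∑ r, u r * C.net r s := by
      have heq : a s + lam * ∑ r, u r * C.net r s
          = (1 - lam) * a s + lam * y s := by
        rw [hyeq s]; ring
      rw [heq]
      have hy := hy0 s
      nlinarith
    have hge : a s + lam * ∑ r, u r * C.net r s ≤ b s := by
      rw [hrep s, Finset.mul_sum]
      have hsum : 0 ≤ ∑ r, (T r - lam * u r) * C.net r s := by
        apply Finset.sum_nonneg
        intro r _
        by_cases hn : 0 ≤ C.net r s
        · exact mul_nonneg (hcoef r) hn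
        · push_neg at hn
          have hlt : C.products r s < C.reactants r s := by
            have : (C.products r s : ℝ) < (C.reactants r s : ℝ) := by
              have := hn
              unfold CRN.net at this
              linarith
            exact_mod_cast this
          have := hnc r s hlt rs hs
          subst this
          rw [hcrs]
          simp
        -- end
      have hdiff : ∑ r, (T r - lam * u r) * C.net r s
          = (∑ r, T r * C.net r s) - ∑ r, lam * (u r * C.net r s) := by
        rw [← Finset.sum_sub_distrib]
        apply Finset.sum_congr rfl
        intro r _
        ring
      rw [hdiff] at hsum
      linarith
    linarith
  -- the unit flux on `rs` is applicable at `b`, contradicting staticity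
  have happb : C.Applicable (fun r => if r = rs then (1 : ℝ) else 0) b := by
    constructor
    · intro r; by_cases h : r = rs <;> simp [h]
    · intro r hr s hs
      by_cases hrr : r = rs
      · subst hrr; exact hbpos s hs
      · simp [hrr] at hr
  have := hb _ happb
  have h1 : (fun r => if r = rs then (1 : ℝ) else 0) rs = 0 := by rw [this]; rfl
  simp at h1

/-- Key lemma: any path's total flux is bounded by a static-state representation. -/
lemma key_le (C : CRN S R) (hnc : C.NonCompetitive) {b : S → ℝ} (hb : C.Static b) :
    ∀ (L : List (R → ℝ)) (a : S → ℝ) (T : R → ℝ), (∀ r, 0 ≤ T r) →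
      (∀ s, b s = a s + ∑ r, T r * C.net r s) →
      ∀ x, pathFrom C a x L → ∀ r, totalFlux L r ≤ T r := by
  intro L
  induction L with
  | nil =>
      intro a T hT _ x _ r
      simpa using hT r
  | cons u L ih =>
      rintro a T hT hrep x ⟨y, hstep, hp⟩ r
      have hu := step_le C hnc hb hT hrep hstep
      have hT' : ∀ r, 0 ≤ T r - u r := fun r => sub_nonneg.2 (hu r)
      have hrep' : ∀ s, b s = y s + ∑ r, (T r - u r) * C.net r s := by
        intro s
        have hsplit : ∑ r, (T r - u r) * C.net r s
            = ∑ r, T r * C.net r s - ∑ r, u r * C.net r s := by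
          rw [← Finset.sum_sub_distrib]
          congr 1
          funext r
          ring
        rw [hrep s, hstep.2.2 s, hsplit]
        ring
      have := ih y (fun r => T r - u r) hT' hrep' x hp r
      simp only [totalFlux_cons]
      linarith

end Aux

/-- In a non-competitive CRN, any two static states line-segment reachable from
the same state coincide. -/
theorem stmt5 {S R : Type} [Fintype S] [Fintype R]
    (C : CRN S R) (hnc : C.NonCompetitive) (a b c : S → ℝ)
    (hab : C.Reach a b) (hac : C.Reach a c)
    (hb : C.Static b) (hc : C.Static c) : b = c := by
  obtain ⟨Lb, hLb⟩ := reach_path C hab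
  obtain ⟨Lc, hLc⟩ := reach_path C hac
  obtain ⟨hTbnn, hTbrep⟩ := path_repr C Lb a b hLb
  obtain ⟨hTcnn, hTcrep⟩ := path_repr C Lc a c hLc
  have h1 : ∀ r, totalFlux Lc r ≤ totalFlux Lb r :=
    key_le C hnc hb Lc a (totalFlux Lb) hTbnn hTbrep c hLc
  have h2 : ∀ r, totalFlux Lb r ≤ totalFlux Lc r :=
    key_le C hnc hc Lb a (totalFlux Lc) hTcnn hTcrep b hLb
  have heq : ∀ r, totalFlux Lb r = totalFlux Lc r :=
    fun r => le_antisymm (h2 r) (h1 r)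
  funext s
  rw [hTbrep s, hTcrep s]
  congr 1
  apply Finset.sum_congr rfl
  intro r _
  rw [heq r]
end

section
/- In a non-competitive CRN, if a → b via line-segment reachability and b is static, then a does not have unbounded potential: there is no infinite sequence a →¹_{u₁} a₁ →¹_{u₂} a₂ →¹ ⋯ and reaction R with Σ_{i=1}^∞ u_i(R) = ∞. -/
/-- An infinite line-segment path. -/
structure CRN.InfPath {S R : Type} [Fintype S] [Fintype R] (C : CRN S R) where
  states : ℕ → S → ℝ
  flux : ℕ → R → ℝ
  valid : ∀ i : ℕ, C.StepWith (flux i) (states i) (states (i + 1))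

/-!
Going from `a` to the static state `b` uses some total flux `T ≥ 0`, with `b = a + M T`. Along any
path from `a` the cumulative flux `c` stays below `T`. Otherwise some step `x → y` with flux `w`
pushes `c + w` past `T`; follow the segment `c + θ w` to the first `θ < 1` at which a coordinate,
say of reaction `r`, reaches `T r`. Staticity of `b` gives a reactant `s` of `r` with `b s ≤ 0`,
and by non-competitiveness `s` is consumed by no other reaction, so the point
`z = a + M (c + θ w)` of the segment from `x` to `y` has `z s ≤ b s ≤ 0`. But `x s > 0` because
`r` fires at `x`, and `y s ≥ 0`, so `z s > 0`.
-/

open Finset Matrix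

namespace CRN

variable {S R : Type} {C : CRN S R}

/-- The stoichiometric matrix, with rows indexed by reactions: the paper's `M u` is
`u ᵥ* C.stoich`. -/
def stoich [Fintype R] (C : CRN S R) : Matrix R S ℝ := Matrix.of C.net

theorem StepWith.eq_add_vecMul [Fintype R] {u : R → ℝ} {a b : S → ℝ} (h : C.StepWith u a b) :
    b = a + u ᵥ* C.stoich := by
  funext s
  simp only [h.2.2 s, Pi.add_apply, vecMul, dotProduct, stoich, of_apply]

theorem Reach.exists_flux [Fintype R] {a b : S → ℝ} (h : C.Reach a b) :
    ∃ T : R → ℝ, 0 ≤ T ∧ b = a + T ᵥ* C.stoich := by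
  induction h with
  | refl => exact ⟨0, le_rfl, by rw [zero_vecMul, add_zero]⟩
  | tail _ hstep ih =>
    obtain ⟨T, hT, rfl⟩ := ih
    obtain ⟨u, hu⟩ := hstep
    exact ⟨T + u, add_nonneg hT hu.1.1, by rw [hu.eq_add_vecMul, add_vecMul, add_assoc]⟩

theorem Static.exists_reactant_nonpos {b : S → ℝ} (hb : C.Static b) (r : R) :
    ∃ s, 0 < C.reactants r s ∧ b s ≤ 0 := by
  classical
  by_contra! h
  have happ : C.Applicable (Pi.single r 1) b := by
    refine ⟨fun r' => ?_, fun r' hr' s hs => ?_⟩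
    · rw [Pi.single_apply]; split_ifs <;> norm_num
    · obtain rfl : r' = r := by
        by_contra hr
        simp [hr] at hr'
      exact h s hs
  simpa using congrFun (hb _ happ) r

theorem NonCompetitive.net_nonneg (hnc : C.NonCompetitive) {r r' : R} {s : S}
    (hs : 0 < C.reactants r s) (hr' : r' ≠ r) : 0 ≤ C.net r' s := by
  by_contra! hneg
  have hlt : C.products r' s < C.reactants r' s := by
    unfold net at hneg
    exact_mod_cast sub_neg.1 hneg
  exact hr' (hnc r' s hlt r hs).symm

theorem NonCompetitive.vecMul_stoich_le [Fintype R] (hnc : C.NonCompetitive) {u v : R → ℝ}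
    {r : R} {s : S} (hs : 0 < C.reactants r s) (huv : u ≤ v) (hr : u r = v r) :
    (u ᵥ* C.stoich) s ≤ (v ᵥ* C.stoich) s := by
  rw [← sub_nonneg, ← Pi.sub_apply, ← sub_vecMul]
  refine Finset.sum_nonneg fun r' _ => ?_
  by_cases hr' : r' = r
  · subst hr'; simp [hr]
  · exact mul_nonneg (sub_nonneg.2 (huv r')) (hnc.net_nonneg hs hr')

end CRN

theorem exists_exit_of_not_add_le {ι : Type*} [Fintype ι] {c w T : ι → ℝ} (hc : c ≤ T)
    (hw : 0 ≤ w) (h : ¬ c + w ≤ T) :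
    ∃ θ : ℝ, ∃ r : ι, 0 ≤ θ ∧ θ < 1 ∧ 0 < w r ∧ c + θ • w ≤ T ∧ c r + θ * w r = T r := by
  classical
  have hE : (univ.filter fun r => T r < c r + w r).Nonempty := by
    simpa [Pi.le_def, Finset.Nonempty] using h
  obtain ⟨r, hrE, hmin⟩ := exists_min_image _ (fun r => (T r - c r) / w r) hE
  simp only [mem_filter, mem_univ, true_and] at hrE hmin
  have hwr : 0 < w r := by linarith [hc r]
  refine ⟨(T r - c r) / w r, r, div_nonneg (by linarith [hc r]) hwr.le,
    (div_lt_one hwr).2 (by linarith), hwr, fun r' => ?_, by field_simp; ring⟩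
  simp only [Pi.add_apply, Pi.smul_apply, smul_eq_mul]
  by_cases hr' : T r' < c r' + w r'
  · have hwr' : 0 < w r' := by linarith [hc r']
    have := (le_div_iff₀ hwr').1 (hmin r' hr')
    linarith
  · have hθ : (T r - c r) / w r ≤ 1 := (div_le_one hwr).2 (by linarith)
    linarith [mul_le_of_le_one_left (hw r') hθ]

namespace CRN.InfPath

variable {S R : Type} [Fintype S] [Fintype R] {C : CRN S R}

def cumFlux (p : C.InfPath) (N : ℕ) : R → ℝ := ∑ i ∈ Finset.range N, p.flux i

theorem cumFlux_succ (p : C.InfPath) (N : ℕ) : p.cumFlux (N + 1) = p.cumFlux N + p.flux N :=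
  Finset.sum_range_succ _ _

theorem states_eq_add_vecMul (p : C.InfPath) (N : ℕ) :
    p.states N = p.states 0 + p.cumFlux N ᵥ* C.stoich := by
  induction N with
  | zero => simp [cumFlux]
  | succ N ih =>
    rw [(p.valid N).eq_add_vecMul, ih, cumFlux_succ, add_vecMul, add_assoc]

theorem cumFlux_le (hnc : C.NonCompetitive) {b : S → ℝ} (hb : C.Static b) (p : C.InfPath)
    {T : R → ℝ} (hT : 0 ≤ T) (hbT : b = p.states 0 + T ᵥ* C.stoich) (N : ℕ) :
    p.cumFlux N ≤ T := by
  induction N with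
  | zero => simpa [cumFlux] using hT
  | succ N ih =>
    have hstep := p.valid N
    rw [cumFlux_succ]
    by_contra hexit
    obtain ⟨θ, r, hθ0, hθ1, hwr, hle, hr⟩ := exists_exit_of_not_add_le ih hstep.1.1 hexit
    obtain ⟨s, hs, hbs⟩ := hb.exists_reactant_nonpos r
    have hx : 0 < p.states N s := hstep.1.2 r hwr s hs
    have hy : 0 ≤ p.states (N + 1) s := hstep.2.1 s
    have hz : p.states 0 s + ((p.cumFlux N + θ • p.flux N) ᵥ* C.stoich) s ≤ b s := by
      rw [hbT]
      exact add_le_add_right (hnc.vecMul_stoich_le hs hle (by simpa using hr)) _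
    have hseg : p.states 0 s + ((p.cumFlux N + θ • p.flux N) ᵥ* C.stoich) s
        = (1 - θ) * p.states N s + θ * p.states (N + 1) s := by
      rw [hstep.eq_add_vecMul, states_eq_add_vecMul p N, add_vecMul, smul_vecMul]
      simp only [Pi.add_apply, Pi.smul_apply, smul_eq_mul]
      ring
    linarith [mul_pos (sub_pos.2 hθ1) hx, mul_nonneg hθ0 hy]

end CRN.InfPath

/-- In a non-competitive CRN, if `a` line-segment reaches a static state `b`,
then `a` does not have unbounded potential: there is no infinite path from `a`
along which the cumulative flux of some reaction diverges. -/
theorem stmt6 {S R : Type} [Fintype S] [Fintype R]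
    (C : CRN S R) (hnc : C.NonCompetitive) (a b : S → ℝ)
    (hab : C.Reach a b) (hb : C.Static b) :
    ¬ ∃ (p : C.InfPath) (r0 : R), p.states 0 = a ∧
        ∀ B : ℝ, ∃ N : ℕ, B < ∑ i ∈ Finset.range N, p.flux i r0 := by
  rintro ⟨p, r0, rfl, hdiv⟩
  obtain ⟨T, hT, hbT⟩ := hab.exists_flux
  obtain ⟨N, hN⟩ := hdiv (T r0)
  have hle := p.cumFlux_le hnc hb hT hbT N r0
  simp only [CRN.InfPath.cumFlux, Finset.sum_apply] at hle
  linarith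
end

section
/- In a non-competitive CRN, if a → b via line-segment reachability with b static, then for every state a' with a → a', we have a' → b. -/
namespace CRN

variable {S R : Type} [Fintype S] [Fintype R]

variable {C : CRN S R}

set_option linter.unusedSectionVars false
set_option linter.unusedVariables false

omit [Fintype S] [Fintype R] in
lemma reactants_pos_of_net_neg {r : R} {s : S} (h : C.net r s < 0) : 0 < C.reactants r s := by
  have : (C.products r s : ℝ) < (C.reactants r s : ℝ) := by
    have := h; unfold net at this; linarith
  have h2 : C.products r s < C.reactants r s := by exact_mod_cast this
  exact Nat.lt_of_le_of_lt (Nat.zero_le _) h2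

omit [Fintype S] [Fintype R] in
lemma nc_unique (hnc : C.NonCompetitive) {r0 : R} {s : S} (h : C.net r0 s < 0) :
    ∀ r, 0 < C.reactants r s → r = r0 := by
  have : (C.products r0 s : ℝ) < (C.reactants r0 s : ℝ) := by
    unfold net at h; linarith
  exact hnc r0 s (by exact_mod_cast this)

omit [Fintype S] [Fintype R] in
lemma net_nonneg_of_ne (hnc : C.NonCompetitive) {r0 r : R} {s : S} (h : C.net r0 s < 0)
    (hne : r ≠ r0) : 0 ≤ C.net r s := by
  by_contra h'
  push_neg at h'
  exact hne (nc_unique hnc h r (reactants_pos_of_net_neg h'))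

omit [Fintype S] in
lemma consumer_exists {u : R → ℝ} {s : S} (hu : ∀ r, 0 ≤ u r)
    (h : ∑ r, u r * C.net r s < 0) : ∃ r, 0 < u r ∧ C.net r s < 0 := by
  by_contra h'
  push_neg at h'
  have : 0 ≤ ∑ r, u r * C.net r s := by
    apply Finset.sum_nonneg
    intro r _
    rcases eq_or_lt_of_le (hu r) with h0 | h0
    · rw [← h0]; simp
    · exact mul_nonneg (le_of_lt h0) (h' r h0)
  linarith

lemma max_clamp (a b c : ℝ) (hb : 0 ≤ b) (hc : 0 ≤ c) :
    max (max (a - b) 0 - c) 0 = max (a - (b + c)) 0 := by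
  rcases le_total a b with h | h
  · rw [max_eq_right (by linarith : a - b ≤ 0)]
    rw [max_eq_right (by linarith : (0:ℝ) - c ≤ 0), max_eq_right (by linarith : a - (b+c) ≤ 0)]
  · rw [max_eq_left (by linarith : (0:ℝ) ≤ a - b)]
    congr 1; ring

lemma max_add_sub (a b : ℝ) : max a b = b + max (a - b) 0 := by
  rcases le_total a b with h | h
  · rw [max_eq_right h, max_eq_right (by linarith : a - b ≤ 0)]; ring
  · rw [max_eq_left h, max_eq_left (by linarith : (0:ℝ) ≤ a - b)]; ring

lemma join_nonneg (hnc : C.NonCompetitive) {x : S → ℝ} {u v : R → ℝ}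
    (hu : ∀ r, 0 ≤ u r) (hv : ∀ r, 0 ≤ v r)
    (hxu : ∀ s, 0 ≤ x s + ∑ r, u r * C.net r s)
    (hxv : ∀ s, 0 ≤ x s + ∑ r, v r * C.net r s) :
    ∀ s, 0 ≤ x s + ∑ r, max (u r) (v r) * C.net r s := by
  intro s
  by_cases hneg : ∃ r0, 0 < max (u r0) (v r0) ∧ C.net r0 s < 0
  · obtain ⟨r0, _, hr0n⟩ := hneg
    have huniq : ∀ r, r ≠ r0 → 0 ≤ C.net r s := fun r hr => net_nonneg_of_ne hnc hr0n hr
    rcases max_choice (u r0) (v r0) with h | h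
    · have : ∑ r, u r * C.net r s ≤ ∑ r, max (u r) (v r) * C.net r s := by
        apply Finset.sum_le_sum
        intro r _
        by_cases hr : r = r0
        · subst hr; rw [h]
        · exact mul_le_mul_of_nonneg_right (le_max_left _ _) (huniq r hr)
      linarith [hxu s]
    · have : ∑ r, v r * C.net r s ≤ ∑ r, max (u r) (v r) * C.net r s := by
        apply Finset.sum_le_sum
        intro r _
        by_cases hr : r = r0
        · subst hr; rw [h]
        · exact mul_le_mul_of_nonneg_right (le_max_right _ _) (huniq r hr)
      linarith [hxv s]
  · push_neg at hneg
    have : ∑ r, u r * C.net r s ≤ ∑ r, max (u r) (v r) * C.net r s := by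
      apply Finset.sum_le_sum
      intro r _
      rcases lt_or_ge 0 (max (u r) (v r)) with h | h
      · exact mul_le_mul_of_nonneg_right (le_max_left _ _) (hneg r h)
      · have hu0 : u r = 0 := le_antisymm (le_trans (le_max_left _ _) h) (hu r)
        have hm0 : max (u r) (v r) = 0 := le_antisymm h (le_trans (hu r) (le_max_left _ _))
        rw [hm0, hu0]
    linarith [hxu s]

open Finset in
open Classical in
/-- Execution lemma: from `x + Mu` we can reach `x + M(u ⊔ v)` when `v` is applicable at `x`. -/
lemma exec (hnc : C.NonCompetitive) (x : S → ℝ) (v : R → ℝ) (hva : C.Applicable v x)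
    (hxv : ∀ s, 0 ≤ x s + ∑ r, v r * C.net r s) :
    ∀ (n : ℕ) (u : R → ℝ), (∀ r, 0 ≤ u r) → (∀ s, 0 ≤ x s + ∑ r, u r * C.net r s) →
      ((Finset.univ.filter (fun r => u r < v r)).card * (Fintype.card S + 1)
        + (Finset.univ.filter (fun s => x s + ∑ r, u r * C.net r s = 0)).card) ≤ n →
      C.Reach (fun s => x s + ∑ r, u r * C.net r s)
              (fun s => x s + ∑ r, max (u r) (v r) * C.net r s) := by
  intro n
  induction n using Nat.strong_induction_on with
  | _ n IH =>
  intro u hu hxu hcard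
  have hv := hva.1
  obtain ⟨z, hzdef⟩ : ∃ z : S → ℝ, z = fun s => x s + ∑ r, u r * C.net r s := ⟨_, rfl⟩
  have hzapp : ∀ s, z s = x s + ∑ r, u r * C.net r s := fun s => by rw [hzdef]
  rw [← hzdef]
  have hznn : ∀ s, 0 ≤ z s := fun s => by rw [hzapp s]; exact hxu s
  by_cases hB : ∃ r, (u r < v r) ∧ ∃ s, 0 < C.reactants r s ∧ z s = 0
  · -- some blocked reaction
    by_cases hp : ∃ rp, (u rp < v rp) ∧ (∀ s, 0 < C.reactants rp s → 0 < z s) ∧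
        ∃ s0, z s0 = 0 ∧ 0 < C.net rp s0
    · -- progress: run a bit of rp
      obtain ⟨rp, hrpF, hrpUnb, s0, hs0z, hs0p⟩ := hp
      have hεex : ∃ ε : ℝ, 0 < ε ∧ ε ≤ v rp - u rp ∧
          ∀ s, C.net rp s < 0 → ε * (-C.net rp s) ≤ z s / 2 := by
        have hEne : (insert (v rp - u rp) ((Finset.univ.filter (fun s => C.net rp s < 0)).image
            (fun s => z s / (2 * (-C.net rp s))))).Nonempty := ⟨_, Finset.mem_insert_self _ _⟩
        refine ⟨_root_.Finset.min' _ hEne, ?_, ?_, ?_⟩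
        · have hmem := Finset.min'_mem _ hEne
          rcases Finset.mem_insert.1 hmem with h | h
          · rw [h]; linarith
          · obtain ⟨s, hs, hval⟩ := Finset.mem_image.1 h
            have hsn : C.net rp s < 0 := (Finset.mem_filter.1 hs).2
            have hzs : 0 < z s := hrpUnb s (reactants_pos_of_net_neg hsn)
            rw [← hval]; exact div_pos hzs (by linarith)
        · exact Finset.min'_le _ _ (Finset.mem_insert_self _ _)
        · intro s hsn
          have hmem : z s / (2 * (-C.net rp s)) ∈ insert (v rp - u rp)
              ((Finset.univ.filter (fun s => C.net rp s < 0)).image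
                (fun s => z s / (2 * (-C.net rp s)))) :=
            Finset.mem_insert_of_mem (Finset.mem_image_of_mem _
              (Finset.mem_filter.2 ⟨Finset.mem_univ _, hsn⟩))
          have hle := Finset.min'_le _ _ hmem
          have hpos : (0:ℝ) < 2 * (-C.net rp s) := by linarith
          have h2 := (le_div_iff₀ hpos).1 hle
          nlinarith
      obtain ⟨ε, hεpos, hεle, hεs⟩ := hεex
      obtain ⟨u', hu'app⟩ : ∃ u' : R → ℝ, ∀ r, u' r = if r = rp then u r + ε else u r :=
        ⟨_, fun _ => rfl⟩
      have hu' : ∀ r, 0 ≤ u' r := by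
        intro r; rw [hu'app r]
        split
        · linarith [hu r]
        · exact hu r
      have hz'val : ∀ s, x s + ∑ r, u' r * C.net r s = z s + ε * C.net rp s := by
        intro s
        have h1 : ∀ r ∈ Finset.univ,
            u' r * C.net r s = u r * C.net r s + (if r = rp then ε * C.net r s else 0) := by
          intro r _
          rw [hu'app r]
          split <;> ring
        rw [Finset.sum_congr rfl h1, Finset.sum_add_distrib, Finset.sum_ite_eq' Finset.univ rp,
          hzapp s]
        simp only [Finset.mem_univ, if_true]
        ring
      have hz'nn : ∀ s, 0 ≤ x s + ∑ r, u' r * C.net r s := by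
        intro s
        rw [hz'val s]
        rcases lt_or_ge (C.net rp s) 0 with h | h
        · have h1 := hεs s h
          rw [mul_neg] at h1
          have h2 : 0 < z s := hrpUnb s (reactants_pos_of_net_neg h)
          linarith
        · have := mul_nonneg (le_of_lt hεpos) h
          linarith [hznn s]
      have hstep : C.Step z (fun s => x s + ∑ r, u' r * C.net r s) := by
        refine ⟨fun r => if r = rp then ε else 0, ⟨⟨?_, ?_⟩, hz'nn, ?_⟩⟩
        · intro r; dsimp only; split
          · exact le_of_lt hεpos
          · exact le_refl 0
        · intro r hr s hs
          dsimp only at hr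
          have : r = rp := by
            by_contra hne
            rw [if_neg hne] at hr
            exact lt_irrefl 0 hr
          subst this
          exact hrpUnb s hs
        · intro s
          have hsite : ∑ r, (if r = rp then ε else 0) * C.net r s = ε * C.net rp s := by
            have h1 : ∀ r ∈ Finset.univ,
                (if r = rp then ε else 0) * C.net r s = (if r = rp then ε * C.net r s else 0) := by
              intro r _; split <;> ring
            rw [Finset.sum_congr rfl h1, Finset.sum_ite_eq' Finset.univ rp]
            simp
          show x s + ∑ r, u' r * C.net r s = z s + ∑ r, (if r = rp then ε else 0) * C.net r s
          rw [hsite, hz'val s]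
      have hjoin : ∀ r, max (u' r) (v r) = max (u r) (v r) := by
        intro r
        rw [hu'app r]
        split
        · rename_i h; subst h
          rw [max_eq_right (by linarith : u r ≤ v r), max_eq_right (by linarith : u r + ε ≤ v r)]
        · rfl
      have hsub : Finset.univ.filter (fun r => u' r < v r) ⊆
          Finset.univ.filter (fun r => u r < v r) := by
        intro r hr
        have hr' := (Finset.mem_filter.1 hr).2
        refine Finset.mem_filter.2 ⟨Finset.mem_univ _, ?_⟩
        rw [hu'app r] at hr'
        by_cases h : r = rp
        · rw [if_pos h] at hr'; linarith
        · rwa [if_neg h] at hr'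
      have hZsub : Finset.univ.filter (fun s => x s + ∑ r, u' r * C.net r s = 0) ⊆
          Finset.univ.filter (fun s => x s + ∑ r, u r * C.net r s = 0) := by
        intro s hs
        have hz's : x s + ∑ r, u' r * C.net r s = 0 := (Finset.mem_filter.1 hs).2
        rw [hz'val s] at hz's
        refine Finset.mem_filter.2 ⟨Finset.mem_univ _, ?_⟩
        rw [← hzapp s]
        rcases lt_or_ge (C.net rp s) 0 with h | h
        · exfalso
          have h2 : 0 < z s := hrpUnb s (reactants_pos_of_net_neg h)
          have h1 := hεs s h
          rw [mul_neg] at h1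
          linarith
        · have h3 := mul_nonneg (le_of_lt hεpos) h
          linarith [hznn s]
      have hmeas : (Finset.univ.filter (fun r => u' r < v r)).card * (Fintype.card S + 1)
          + (Finset.univ.filter (fun s => x s + ∑ r, u' r * C.net r s = 0)).card
          < (Finset.univ.filter (fun r => u r < v r)).card * (Fintype.card S + 1)
          + (Finset.univ.filter (fun s => x s + ∑ r, u r * C.net r s = 0)).card := by
        have hZcard := Finset.card_le_card hZsub
        have hFcard := Finset.card_le_card hsub
        have hZS : (Finset.univ.filter (fun s => x s + ∑ r, u' r * C.net r s = 0)).card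
            ≤ Fintype.card S := by
          calc (Finset.univ.filter (fun s => x s + ∑ r, u' r * C.net r s = 0)).card
              ≤ Finset.univ.card := Finset.card_le_card (Finset.filter_subset _ _)
            _ = Fintype.card S := Finset.card_univ
        by_cases hfull : v rp - u rp ≤ ε
        · have hrpF' : rp ∉ Finset.univ.filter (fun r => u' r < v r) := by
            intro hmem
            have h1 := (Finset.mem_filter.1 hmem).2
            rw [hu'app rp, if_pos rfl] at h1
            linarith
          have hrpinF : rp ∈ Finset.univ.filter (fun r => u r < v r) :=
            Finset.mem_filter.2 ⟨Finset.mem_univ _, hrpF⟩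
          have hFlt : (Finset.univ.filter (fun r => u' r < v r)).card
              < (Finset.univ.filter (fun r => u r < v r)).card :=
            Finset.card_lt_card ((Finset.ssubset_iff_of_subset hsub).2 ⟨rp, hrpinF, hrpF'⟩)
          have h5 : (Finset.univ.filter (fun r => u' r < v r)).card + 1
              ≤ (Finset.univ.filter (fun r => u r < v r)).card := hFlt
          nlinarith [Nat.zero_le (Finset.univ.filter (fun s => x s + ∑ r, u r * C.net r s = 0)).card]
        · push_neg at hfull
          have hs0Z : s0 ∈ Finset.univ.filter (fun s => x s + ∑ r, u r * C.net r s = 0) :=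
            Finset.mem_filter.2 ⟨Finset.mem_univ _, by rw [← hzapp s0]; exact hs0z⟩
          have hs0Z' : s0 ∉ Finset.univ.filter (fun s => x s + ∑ r, u' r * C.net r s = 0) := by
            intro hmem
            have h1 : x s0 + ∑ r, u' r * C.net r s0 = 0 := (Finset.mem_filter.1 hmem).2
            rw [hz'val s0, hs0z] at h1
            nlinarith
          have hZlt : (Finset.univ.filter (fun s => x s + ∑ r, u' r * C.net r s = 0)).card
              < (Finset.univ.filter (fun s => x s + ∑ r, u r * C.net r s = 0)).card :=
            Finset.card_lt_card ((Finset.ssubset_iff_of_subset hZsub).2 ⟨s0, hs0Z, hs0Z'⟩)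
          nlinarith [Nat.mul_le_mul_right (Fintype.card S + 1) hFcard]
      have hrec := IH _ (lt_of_lt_of_le hmeas hcard) u' hu' hz'nn le_rfl
      have hjoineq : (fun s => x s + ∑ r, max (u' r) (v r) * C.net r s)
          = (fun s => x s + ∑ r, max (u r) (v r) * C.net r s) := by
        funext s; congr 1
        exact Finset.sum_congr rfl (fun r _ => by rw [hjoin r])
      rw [hjoineq] at hrec
      exact Relation.ReflTransGen.head hstep hrec
    · -- no progress possible: contradiction
      exfalso
      push_neg at hp
      obtain ⟨Bf, hBfdef⟩ : ∃ B : Finset R, B = Finset.univ.filter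
          (fun r => u r < v r ∧ ∃ s, 0 < C.reactants r s ∧ z s = 0) := ⟨_, rfl⟩
      have hBfne : Bf.Nonempty := by
        obtain ⟨r, h1, h2⟩ := hB
        exact ⟨r, by rw [hBfdef]; exact Finset.mem_filter.2 ⟨Finset.mem_univ _, h1, h2⟩⟩
      obtain ⟨rs, hrsBf, hrseq⟩ := Finset.exists_mem_eq_inf' hBfne (fun r => u r / (v r - u r))
      obtain ⟨t', ht'eq⟩ : ∃ t : ℝ, t = u rs / (v rs - u rs) := ⟨_, rfl⟩
      have hrsmem := hrsBf
      rw [hBfdef] at hrsmem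
      obtain ⟨hrsF, ss, hssre, hssz⟩ := (Finset.mem_filter.1 hrsmem).2
      have hxss : 0 < x ss := hva.2 rs (by linarith [hu rs] : 0 < v rs) ss hssre
      have hsumu : ∑ r, u r * C.net r ss = -(x ss) := by
        have h1 := hssz
        rw [hzapp ss] at h1; linarith
      obtain ⟨rc, hrc1, hrc2⟩ := consumer_exists hu (by rw [hsumu]; linarith)
      have hrsrc : rs = rc := nc_unique hnc hrc2 rs hssre
      have hnetrs : C.net rs ss < 0 := by rw [hrsrc]; exact hrc2
      have hurs : 0 < u rs := by rw [hrsrc]; exact hrc1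
      have hnets : ∀ r, r ≠ rs → 0 ≤ C.net r ss := fun r hr => net_nonneg_of_ne hnc hnetrs hr
      -- (I)
      have hIsplit := Finset.sum_filter_add_sum_filter_not Finset.univ
        (fun r => u r < v r ∧ ∃ s, 0 < C.reactants r s ∧ z s = 0) (fun r => u r * C.net r ss)
      rw [← hBfdef] at hIsplit
      have hcompl1 : 0 ≤ ∑ r ∈ Finset.univ.filter
          (fun r => ¬(u r < v r ∧ ∃ s, 0 < C.reactants r s ∧ z s = 0)), u r * C.net r ss := by
        apply Finset.sum_nonneg
        intro r hr
        have hrne : r ≠ rs := by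
          intro he; subst he
          exact (Finset.mem_filter.1 hr).2 (Finset.mem_filter.1 hrsmem).2
        exact mul_nonneg (hu r) (hnets r hrne)
      have hI : ∑ r ∈ Bf, u r * C.net r ss ≤ -(x ss) := by
        rw [hsumu] at hIsplit; linarith
      -- (II)
      have hjn := join_nonneg hnc hu hv hxu hxv
      have hmaxsplit : ∑ r, max (u r) (v r) * C.net r ss
          = (∑ r, u r * C.net r ss) + ∑ r, (if u r < v r then v r - u r else 0) * C.net r ss := by
        rw [← Finset.sum_add_distrib]
        apply Finset.sum_congr rfl
        intro r _
        by_cases h : u r < v r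
        · rw [if_pos h, max_eq_right (le_of_lt h)]; ring
        · rw [if_neg h, max_eq_left (le_of_not_gt h)]; ring
      have hftot : 0 ≤ ∑ r, (if u r < v r then v r - u r else 0) * C.net r ss := by
        have h1 := hjn ss
        rw [hmaxsplit, hsumu] at h1; linarith
      have hfsplit := Finset.sum_filter_add_sum_filter_not Finset.univ
        (fun r => u r < v r ∧ ∃ s, 0 < C.reactants r s ∧ z s = 0)
        (fun r => (if u r < v r then v r - u r else 0) * C.net r ss)
      rw [← hBfdef] at hfsplit
      have hcompl2 : ∑ r ∈ Finset.univ.filter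
          (fun r => ¬(u r < v r ∧ ∃ s, 0 < C.reactants r s ∧ z s = 0)),
          (if u r < v r then v r - u r else 0) * C.net r ss ≤ 0 := by
        apply Finset.sum_nonpos
        intro r hr
        have hnP := (Finset.mem_filter.1 hr).2
        by_cases huv : u r < v r
        · have hnex : ¬ ∃ s, 0 < C.reactants r s ∧ z s = 0 := fun hex => hnP ⟨huv, hex⟩
          push_neg at hnex
          have hunb : ∀ s, 0 < C.reactants r s → 0 < z s := by
            intro s hsre
            exact lt_of_le_of_ne (hznn s) (Ne.symm (hnex s hsre))
          have hle := hp r huv hunb ss hssz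
          rw [if_pos huv]
          exact mul_nonpos_of_nonneg_of_nonpos (by linarith) hle
        · rw [if_neg huv]; simp
      have hBfcongr : ∑ r ∈ Bf, (if u r < v r then v r - u r else 0) * C.net r ss
          = ∑ r ∈ Bf, (v r - u r) * C.net r ss := by
        apply Finset.sum_congr rfl
        intro r hr
        rw [hBfdef] at hr
        rw [if_pos (Finset.mem_filter.1 hr).2.1]
      have hII : 0 ≤ ∑ r ∈ Bf, (v r - u r) * C.net r ss := by
        rw [hBfcongr] at hfsplit; linarith
      -- (III)
      have ht'le : ∀ r ∈ Bf, t' * (v r - u r) ≤ u r := by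
        intro r hr
        have h1 : Bf.inf' hBfne (fun r => u r / (v r - u r)) ≤ u r / (v r - u r) :=
          Finset.inf'_le _ hr
        rw [hrseq, ← ht'eq] at h1
        have hrm := hr
        rw [hBfdef] at hrm
        have h2 : (0:ℝ) < v r - u r := by
          have := (Finset.mem_filter.1 hrm).2.1; linarith
        calc t' * (v r - u r) ≤ (u r / (v r - u r)) * (v r - u r) := by nlinarith
          _ = u r := div_mul_cancel₀ _ (ne_of_gt h2)
      have ht'0 : 0 ≤ t' := by
        rw [ht'eq]
        exact div_nonneg (hu rs) (by linarith)
      have hIII : 0 ≤ ∑ r ∈ Bf, (u r - t' * (v r - u r)) * C.net r ss := by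
        apply Finset.sum_nonneg
        intro r hr
        by_cases h : r = rs
        · subst h
          have hz2 : (0:ℝ) < v r - u r := by linarith [hrsF]
          have h0 : u r - t' * (v r - u r) = 0 := by
            rw [ht'eq, div_mul_cancel₀ _ (ne_of_gt hz2)]; ring
          rw [h0, zero_mul]
        · exact mul_nonneg (by linarith [ht'le r hr]) (hnets r h)
      -- (IV)
      have hexp : ∑ r ∈ Bf, (u r - t' * (v r - u r)) * C.net r ss
          = (∑ r ∈ Bf, u r * C.net r ss) - t' * (∑ r ∈ Bf, (v r - u r) * C.net r ss) := by
        rw [Finset.mul_sum, ← Finset.sum_sub_distrib]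
        apply Finset.sum_congr rfl
        intro r _; ring
      have h6 := mul_nonneg ht'0 hII
      rw [hexp] at hIII
      linarith
  · -- no blocked reaction: single step
    push_neg at hB
    refine Relation.ReflTransGen.single
      ⟨fun r => if u r < v r then v r - u r else 0, ⟨⟨?_, ?_⟩, ?_, ?_⟩⟩
    · intro r; dsimp only; split
      · rename_i h; linarith
      · exact le_refl 0
    · intro r hr s hs
      dsimp only at hr
      have hrF : u r < v r := by
        by_contra hne
        rw [if_neg hne] at hr
        exact lt_irrefl 0 hr
      exact lt_of_le_of_ne (hznn s) (Ne.symm (hB r hrF s hs))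
    · exact join_nonneg hnc hu hv hxu hxv
    · intro s
      show x s + ∑ r, max (u r) (v r) * C.net r s
          = z s + ∑ r, (if u r < v r then v r - u r else 0) * C.net r s
      have h1 : ∀ r ∈ Finset.univ, max (u r) (v r) * C.net r s
          = u r * C.net r s + (if u r < v r then v r - u r else 0) * C.net r s := by
        intro r _
        by_cases h : u r < v r
        · rw [if_pos h, max_eq_right (le_of_lt h)]; ring
        · rw [if_neg h, max_eq_left (le_of_not_gt h)]; ring
      rw [Finset.sum_congr rfl h1, Finset.sum_add_distrib, hzapp s]
      ring

open Finset in
open Classical in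
lemma comm (hnc : C.NonCompetitive) {x zz : S → ℝ} (h : C.Reach x zz) :
    ∀ u : R → ℝ, (∀ r, 0 ≤ u r) → (∀ s, 0 ≤ x s + ∑ r, u r * C.net r s) →
    ∃ W : R → ℝ, (∀ r, 0 ≤ W r) ∧ (∀ s, zz s = x s + ∑ r, W r * C.net r s) ∧
      C.Reach (fun s => x s + ∑ r, u r * C.net r s)
              (fun s => zz s + ∑ r, max (u r - W r) 0 * C.net r s) := by
  induction h using Relation.ReflTransGen.head_induction_on with
  | refl =>
    intro u hu hxu
    refine ⟨fun _ => 0, fun r => le_refl 0, fun s => by simp, ?_⟩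
    have he : (fun s => zz s + ∑ r, max (u r - 0) 0 * C.net r s)
        = fun s => zz s + ∑ r, u r * C.net r s := by
      funext s; congr 1
      refine Finset.sum_congr rfl fun r _ => ?_
      rw [sub_zero, max_eq_left (hu r)]
    rw [he]
    exact Relation.ReflTransGen.refl
  | @head a c hstep htail IH =>
    intro u hu hxu
    obtain ⟨w, hwap, hcnn, hceq⟩ := hstep
    have hw0 : ∀ r, 0 ≤ w r := hwap.1
    have hxw : ∀ s, 0 ≤ a s + ∑ r, w r * C.net r s := fun s => (hceq s) ▸ hcnn s
    have hEL := exec hnc a w hwap hxw _ u hu hxu le_rfl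
    have hmid : (fun s => a s + ∑ r, max (u r) (w r) * C.net r s)
        = (fun s => c s + ∑ r, max (u r - w r) 0 * C.net r s) := by
      funext s
      rw [hceq s]
      have h1 : ∀ r ∈ Finset.univ, max (u r) (w r) * C.net r s
          = w r * C.net r s + max (u r - w r) 0 * C.net r s := by
        intro r _; rw [max_add_sub (u r) (w r)]; ring
      rw [Finset.sum_congr rfl h1, Finset.sum_add_distrib]; ring
    rw [hmid] at hEL
    have hcu1 : ∀ s, 0 ≤ c s + ∑ r, max (u r - w r) 0 * C.net r s := by
      intro s
      have h2 : a s + ∑ r, max (u r) (w r) * C.net r s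
          = c s + ∑ r, max (u r - w r) 0 * C.net r s := congrFun hmid s
      have h3 := join_nonneg hnc hu hw0 hxu hxw s
      linarith
    obtain ⟨W', hW'0, hW'eq, hW'reach⟩ := IH (fun r => max (u r - w r) 0)
      (fun r => le_max_right _ _) hcu1
    refine ⟨fun r => w r + W' r, fun r => add_nonneg (hw0 r) (hW'0 r), ?_, ?_⟩
    · intro s
      rw [hW'eq s, hceq s]
      have h4 : ∀ r ∈ Finset.univ, (w r + W' r) * C.net r s
          = w r * C.net r s + W' r * C.net r s := by
        intro r _; ring
      rw [Finset.sum_congr rfl h4, Finset.sum_add_distrib]; ring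
    · have hres : (fun s => zz s + ∑ r, max (max (u r - w r) 0 - W' r) 0 * C.net r s)
          = (fun s => zz s + ∑ r, max (u r - (w r + W' r)) 0 * C.net r s) := by
        funext s; congr 1
        exact Finset.sum_congr rfl fun r _ => by rw [max_clamp _ _ _ (hw0 r) (hW'0 r)]
      rw [hres] at hW'reach
      exact hEL.trans hW'reach

lemma static_absorb {b q : S → ℝ} (hb : C.Static b) (h : C.Reach b q) : q = b := by
  induction h with
  | refl => rfl
  | tail h1 h2 ih =>
    rw [ih] at h2
    obtain ⟨w, hwap, hqnn, hqeq⟩ := h2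
    have hw0 : w = 0 := hb w hwap
    funext s
    rw [hqeq s, hw0]
    simp

open Finset in
open Classical in
lemma step_to_static (hnc : C.NonCompetitive) {c a' b : S → ℝ} (hstep : C.Step c a')
    (hcb : C.Reach c b) (hb : C.Static b) : C.Reach a' b := by
  obtain ⟨v, hvap, ha'nn, ha'eq⟩ := hstep
  have hxu : ∀ s, 0 ≤ c s + ∑ r, v r * C.net r s := fun s => (ha'eq s) ▸ ha'nn s
  obtain ⟨W, hW0, hWeq, hWreach⟩ := comm hnc hcb v hvap.1 hxu
  have hstart : (fun s => c s + ∑ r, v r * C.net r s) = a' := funext fun s => (ha'eq s).symm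
  rw [hstart] at hWreach
  have hvW : ∀ r, v r ≤ W r := by
    rcases Relation.ReflTransGen.cases_tail hcb with heq | ⟨d, hcd, hdb⟩
    · have happb : C.Applicable v b := by rw [heq]; exact hvap
      have hv0 : v = 0 := hb v happb
      intro r
      rw [hv0]
      simpa using hW0 r
    · obtain ⟨w, hw⟩ := hdb
      have hbnn : ∀ s, 0 ≤ b s := hw.2.1
      by_contra hcon
      push_neg at hcon
      obtain ⟨r0, hr0⟩ := hcon
      have hdead : ∀ r, 0 < v r → ∃ s, 0 < C.reactants r s ∧ b s = 0 := by
        intro r hvr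
        by_contra hno
        push_neg at hno
        have happ : C.Applicable (fun r' => if r' = r then 1 else 0) b := by
          constructor
          · intro r'; dsimp only; split
            · exact zero_le_one
            · exact le_refl 0
          · intro r' hr' s hs
            dsimp only at hr'
            have : r' = r := by
              by_contra hne; rw [if_neg hne] at hr'; exact lt_irrefl 0 hr'
            subst this
            exact lt_of_le_of_ne (hbnn s) (Ne.symm (hno s hs))
        have h0 := hb _ happ
        have h1 := congrFun h0 r
        simp at h1
      obtain ⟨Ef, hEfdef⟩ : ∃ E : Finset R, E = Finset.univ.filter (fun r => W r < v r) :=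
        ⟨_, rfl⟩
      have hEfne : Ef.Nonempty :=
        ⟨r0, by rw [hEfdef]; exact Finset.mem_filter.2 ⟨Finset.mem_univ _, hr0⟩⟩
      obtain ⟨rs, hrsEf, hrseq⟩ := Finset.exists_mem_eq_inf' hEfne (fun r => W r / (v r - W r))
      obtain ⟨t', ht'eq⟩ : ∃ t : ℝ, t = W rs / (v rs - W rs) := ⟨_, rfl⟩
      have hrsmem := hrsEf
      rw [hEfdef] at hrsmem
      have hWv : W rs < v rs := (Finset.mem_filter.1 hrsmem).2
      obtain ⟨ss, hssre, hssb⟩ := hdead rs (lt_of_le_of_lt (hW0 rs) hWv)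
      have hcss : 0 < c ss := hvap.2 rs (lt_of_le_of_lt (hW0 rs) hWv) ss hssre
      have hsumW : ∑ r, W r * C.net r ss = -(c ss) := by
        have h1 := hWeq ss
        rw [hssb] at h1
        linarith
      obtain ⟨rc, hrc1, hrc2⟩ := consumer_exists hW0 (by rw [hsumW]; linarith)
      have hrsrc : rs = rc := nc_unique hnc hrc2 rs hssre
      have hnetrs : C.net rs ss < 0 := by rw [hrsrc]; exact hrc2
      have hnets : ∀ r, r ≠ rs → 0 ≤ C.net r ss := fun r hr => net_nonneg_of_ne hnc hnetrs hr
      have hIsplit := Finset.sum_filter_add_sum_filter_not Finset.univ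
        (fun r => W r < v r) (fun r => W r * C.net r ss)
      rw [← hEfdef] at hIsplit
      have hcompl1 : 0 ≤ ∑ r ∈ Finset.univ.filter (fun r => ¬ W r < v r),
          W r * C.net r ss := by
        apply Finset.sum_nonneg
        intro r hr
        have hrne : r ≠ rs := by
          intro he; subst he
          exact (Finset.mem_filter.1 hr).2 hWv
        exact mul_nonneg (hW0 r) (hnets r hrne)
      have hI : ∑ r ∈ Ef, W r * C.net r ss ≤ -(c ss) := by
        rw [hsumW] at hIsplit; linarith
      have hvtot : 0 ≤ c ss + ∑ r, v r * C.net r ss := hxu ss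
      have hsubd : ∑ r, (v r - W r) * C.net r ss
          = (∑ r, v r * C.net r ss) - ∑ r, W r * C.net r ss := by
        rw [← Finset.sum_sub_distrib]
        apply Finset.sum_congr rfl
        intro r _; ring
      have hdtot : 0 ≤ ∑ r, (v r - W r) * C.net r ss := by
        rw [hsubd, hsumW]; linarith
      have hfsplit := Finset.sum_filter_add_sum_filter_not Finset.univ
        (fun r => W r < v r) (fun r => (v r - W r) * C.net r ss)
      rw [← hEfdef] at hfsplit
      have hcompl2 : ∑ r ∈ Finset.univ.filter (fun r => ¬ W r < v r),
          (v r - W r) * C.net r ss ≤ 0 := by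
        apply Finset.sum_nonpos
        intro r hr
        have hnP := (Finset.mem_filter.1 hr).2
        have hrne : r ≠ rs := by
          intro he; subst he; exact hnP hWv
        push_neg at hnP
        exact mul_nonpos_iff.2 (Or.inr ⟨by linarith, hnets r hrne⟩)
      have hII : 0 ≤ ∑ r ∈ Ef, (v r - W r) * C.net r ss := by linarith
      have ht'le : ∀ r ∈ Ef, t' * (v r - W r) ≤ W r := by
        intro r hr
        have h1 : Ef.inf' hEfne (fun r => W r / (v r - W r)) ≤ W r / (v r - W r) :=
          Finset.inf'_le _ hr
        rw [hrseq, ← ht'eq] at h1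
        have hrm := hr
        rw [hEfdef] at hrm
        have h2 : (0:ℝ) < v r - W r := by
          have := (Finset.mem_filter.1 hrm).2; linarith
        calc t' * (v r - W r) ≤ (W r / (v r - W r)) * (v r - W r) := by nlinarith
          _ = W r := div_mul_cancel₀ _ (ne_of_gt h2)
      have ht'0 : 0 ≤ t' := by
        rw [ht'eq]
        exact div_nonneg (hW0 rs) (by linarith)
      have hIII : 0 ≤ ∑ r ∈ Ef, (W r - t' * (v r - W r)) * C.net r ss := by
        apply Finset.sum_nonneg
        intro r hr
        by_cases h : r = rs
        · subst h
          have hz2 : (0:ℝ) < v r - W r := by linarith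
          have h0 : W r - t' * (v r - W r) = 0 := by
            rw [ht'eq, div_mul_cancel₀ _ (ne_of_gt hz2)]; ring
          rw [h0, zero_mul]
        · exact mul_nonneg (by linarith [ht'le r hr]) (hnets r h)
      have hexp : ∑ r ∈ Ef, (W r - t' * (v r - W r)) * C.net r ss
          = (∑ r ∈ Ef, W r * C.net r ss) - t' * (∑ r ∈ Ef, (v r - W r) * C.net r ss) := by
        rw [Finset.mul_sum, ← Finset.sum_sub_distrib]
        apply Finset.sum_congr rfl
        intro r _; ring
      have h6 := mul_nonneg ht'0 hII
      rw [hexp] at hIII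
      linarith
  have hzero : (fun s => b s + ∑ r, max (v r - W r) 0 * C.net r s) = b := by
    funext s
    have h1 : ∀ r ∈ Finset.univ, max (v r - W r) 0 * C.net r s = 0 := by
      intro r _
      rw [max_eq_right (sub_nonpos.2 (hvW r)), zero_mul]
    rw [Finset.sum_congr rfl h1, Finset.sum_const_zero, add_zero]
  rw [hzero] at hWreach
  exact hWreach

end CRN



/-- In a non-competitive CRN, if `a` line-segment reaches a static state `b`,
then every state `a'` line-segment reachable from `a` also reaches `b`. -/
theorem stmt7 {S R : Type} [Fintype S] [Fintype R]
    (C : CRN S R) (hnc : C.NonCompetitive) (a b : S → ℝ)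
    (hab : C.Reach a b) (hb : C.Static b) :
    ∀ a' : S → ℝ, C.Reach a a' → C.Reach a' b := by
  intro a' haa'
  have h : Relation.ReflTransGen C.Step a a' := haa'
  clear haa'
  induction h with
  | refl => exact hab
  | tail h1 h2 ih => exact CRN.step_to_static hnc h2 ih hb
end

section
/- In the discrete (stochastic) model, for a non-competitive CRN: if there exist two paths p₁ and p₂ from state a where p₁ is finite and ends in state b, and p₂ applies some reaction R strictly more times than p₁ does, then b is not static. -/
namespace CRN

variable {S R : Type} [Fintype S] [Fintype R] [DecidableEq R]

/-- In the discrete (stochastic) model, reaction `r` is applicable at a count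
vector `a` if all its reactants have positive count. -/
def DApplicable (C : CRN S R) (r : R) (a : S → ℕ) : Prop :=
  ∀ s, 0 < C.reactants r s → 0 < a s

/-- One discrete reaction event: `b = a + M·e_r` with `r` applicable at `a`. -/
def DStep (C : CRN S R) (r : R) (a b : S → ℕ) : Prop :=
  C.DApplicable r a ∧
    ∀ s, (b s : ℤ) = (a s : ℤ) + C.products r s - C.reactants r s

/-- A discrete state is static if no reaction is applicable at it. -/
def DStatic (C : CRN S R) (a : S → ℕ) : Prop := ∀ r, ¬ C.DApplicable r a

/-- A discrete path of length `n`: a sequence of `n` single-reaction events. -/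
structure DPath (C : CRN S R) (n : ℕ) where
  states : Fin (n + 1) → S → ℕ
  rxn : Fin n → R
  valid : ∀ i : Fin n, C.DStep (rxn i) (states i.castSucc) (states i.succ)

/-- The flux of reaction `r0` along a discrete path: how many times it fires. -/
def DPath.fluxOf {C : CRN S R} {n : ℕ} (p : C.DPath n) (r0 : R) : ℕ :=
  (Finset.univ.filter fun i : Fin n => p.rxn i = r0).card

end CRN
set_option linter.unusedSectionVars false

namespace CRN

variable {S R : Type} [Fintype S] [Fintype R] [DecidableEq R]

/-- List-based reachability. -/
inductive DReachL (C : CRN S R) : (S → ℕ) → List R → (S → ℕ) → Prop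
  | nil (a : S → ℕ) : DReachL C a [] a
  | cons {a a' b : S → ℕ} {r : R} {l : List R} :
      C.DStep r a a' → DReachL C a' l b → DReachL C a (r :: l) b

lemma dstep_unique {C : CRN S R} {r : R} {a b b' : S → ℕ}
    (h1 : C.DStep r a b) (h2 : C.DStep r a b') : b = b' := by
  funext s
  have e1 := h1.2 s
  have e2 := h2.2 s
  omega

lemma swap {C : CRN S R} (hnc : C.NonCompetitive) {r1 : R} :
    ∀ (l1 : List R) (a b a' : S → ℕ), C.DReachL a l1 b → C.DStatic b →
      C.DStep r1 a a' →
      ∃ l1', C.DReachL a' l1' b ∧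
        ∀ r, l1.count r = l1'.count r + (if r = r1 then 1 else 0) := by
  intro l1
  induction l1 with
  | nil =>
    intro a b a' hre hst hstep
    cases hre
    exact absurd hstep.1 (hst r1)
  | cons r l ih =>
    intro a b a' hre hst hstep
    cases hre with
    | @cons _ a2 _ _ _ h1 h2 =>
      by_cases hr : r = r1
      · subst hr
        have heq : a' = a2 := dstep_unique hstep h1
        subst heq
        refine ⟨l, h2, fun x => ?_⟩
        rw [List.count_cons]
        split <;> split <;> simp_all
      · -- commute the two steps
        have key : ∀ s, C.reactants r1 s ≤ a2 s + C.products r1 s := by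
          intro s
          by_cases hd : C.products r1 s < C.reactants r1 s
          · have hr0 : C.reactants r s = 0 := by
              by_contra hpos
              exact hr (hnc r1 s hd r (Nat.pos_of_ne_zero hpos))
            have e1 := h1.2 s
            have e2 := hstep.2 s
            omega
          · omega
        have app2 : C.DApplicable r1 a2 := by
          intro s hs
          have ha : 0 < a s := hstep.1 s hs
          have e1 := h1.2 s
          by_cases hd : C.products r1 s < C.reactants r1 s
          · have hr0 : C.reactants r s = 0 := by
              by_contra hpos
              exact hr (hnc r1 s hd r (Nat.pos_of_ne_zero hpos))
            omega
          · have hnd : ¬ C.products r s < C.reactants r s := fun hd' =>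
              hr (hnc r s hd' r1 hs).symm
            omega
        have app' : C.DApplicable r a' := by
          intro s hs
          have ha : 0 < a s := h1.1 s hs
          have e2 := hstep.2 s
          have hnd : ¬ C.products r1 s < C.reactants r1 s := fun hd =>
            hr (hnc r1 s hd r hs)
          omega
        set a2' : S → ℕ := fun s => a2 s + C.products r1 s - C.reactants r1 s with ha2'
        have e2' : ∀ s, (a2' s : ℤ) = (a2 s : ℤ) + C.products r1 s - C.reactants r1 s := by
          intro s
          have := key s
          simp only [ha2']
          omega
        have step2' : C.DStep r1 a2 a2' := ⟨app2, e2'⟩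
        have stepr' : C.DStep r a' a2' := by
          refine ⟨app', fun s => ?_⟩
          have u1 := h1.2 s
          have u2 := hstep.2 s
          have u3 := e2' s
          omega
        obtain ⟨l', hre', hcnt⟩ := ih a2 b a2' h2 hst step2'
        refine ⟨r :: l', DReachL.cons stepr' hre', fun x => ?_⟩
        have hc := hcnt x
        rw [List.count_cons, List.count_cons, hc]
        ring

lemma count_le {C : CRN S R} (hnc : C.NonCompetitive) :
    ∀ (l2 : List R) (a b c l1 : _), C.DReachL a l1 b → C.DStatic b →
      C.DReachL a l2 c → ∀ r, l2.count r ≤ l1.count r := by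
  intro l2
  induction l2 with
  | nil => intro a b c l1 _ _ _ r; simp
  | cons r1 l2' ih =>
    intro a b c l1 h1 hst h2 r
    cases h2 with
    | cons hs h2' =>
      obtain ⟨l1', hre', hcnt⟩ := swap hnc l1 a b _ h1 hst hs
      have ha := ih _ b c l1' hre' hst h2' r
      have hb := hcnt r
      rw [List.count_cons, hb]
      simp only [beq_iff_eq]
      have hsw : (if r1 = r then 1 else 0) = (if r = r1 then 1 else 0) := by
        rcases eq_or_ne r r1 with h | h
        · subst h; rfl
        · rw [if_neg h.symm, if_neg h]
      rw [hsw]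
      exact Nat.add_le_add_right ha _

lemma ofPath {C : CRN S R} : ∀ {n : ℕ} (p : C.DPath n),
    C.DReachL (p.states 0) (List.ofFn p.rxn) (p.states (Fin.last n)) := by
  intro n
  induction n with
  | zero =>
    intro p
    rw [show (Fin.last 0) = 0 from rfl]
    simpa using DReachL.nil (p.states 0)
  | succ n ih =>
    intro p
    let tail : C.DPath n :=
      ⟨fun i => p.states i.succ, fun i => p.rxn i.succ, fun i => by
        have := p.valid i.succ
        rwa [← Fin.succ_castSucc] at this⟩
    have h := ih tail
    rw [List.ofFn_succ]
    refine DReachL.cons (a' := p.states (0 : Fin (n + 1)).succ) ?_ ?_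
    · exact p.valid 0
    · have ht : tail.states (Fin.last n) = p.states (Fin.last (n + 1)) := by
        show p.states (Fin.last n).succ = _
        rw [Fin.succ_last]
      rw [← ht]
      exact h

lemma count_ofFn {n : ℕ} (f : Fin n → R) (r0 : R) :
    (List.ofFn f).count r0 = (Finset.univ.filter fun i => f i = r0).card := by
  induction n with
  | zero => simp
  | succ n ih =>
    rw [List.ofFn_succ, List.count_cons, ih fun i => f i.succ]
    rw [Finset.card_filter, Finset.card_filter, Fin.sum_univ_succ]
    simp only [beq_iff_eq]
    ring

end CRN
/-- Discrete model: in a non-competitive CRN, if a finite path `p₁` from `a`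
ends in `b` and another path `p₂` from `a` applies some reaction `r0` strictly
more times than `p₁`, then `b` is not static. -/
theorem stmt16 {S R : Type} [Fintype S] [Fintype R] [DecidableEq R]
    (C : CRN S R) (hnc : C.NonCompetitive)
    {n m : ℕ} (p1 : C.DPath n) (p2 : C.DPath m)
    (hstart : p1.states 0 = p2.states 0)
    (r0 : R) (hflux : p1.fluxOf r0 < p2.fluxOf r0) :
    ¬ C.DStatic (p1.states (Fin.last n)) := by
  intro hstatic
  have h1 := CRN.ofPath p1
  have h2 := CRN.ofPath p2
  rw [hstart] at h1
  have hle := CRN.count_le hnc (List.ofFn p2.rxn) (p2.states 0)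
    (p1.states (Fin.last n)) (p2.states (Fin.last m)) (List.ofFn p1.rxn) h1 hstatic h2 r0
  rw [CRN.count_ofFn, CRN.count_ofFn] at hle
  exact absurd hle (Nat.not_le.mpr hflux)
end

section
/- Unimolecular reaction elimination preserves reachability in non-competitive CRNs: suppose a non-competitive CRN has a unimolecular reaction R with sole reactant S, S is not a reactant in any other reaction, and states a, b satisfy a(S) = b(S) = 0, a → b, and b is static. Form the optimized CRN by deleting R and species S and, in every reaction producing S, replacing each unit of S in the products by the products of R. Then in the optimized CRN, the projection of a (deleting coordinate S) line-segment reaches the projection of b. -/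
section Aux

variable {S R : Type} [Fintype S] [Fintype R] [DecidableEq S] [DecidableEq R]

private lemma sum_split (r0 : R) (f : R → ℝ) :
    ∑ r, f r = f r0 + ∑ r : {r : R // r ≠ r0}, f r.1 := by
  rw [← Finset.add_sum_erase _ f (Finset.mem_univ r0)]
  congr 1
  exact (Finset.sum_subtype _ (by simp) f)

private lemma step_lemma (C : CRN S R) (s0 : S) (r0 : R)
    (huni : C.reactants r0 s0 = 1)
    (honly : ∀ s, s ≠ s0 → C.reactants r0 s = 0)
    (hnoprod : C.products r0 s0 = 0)
    (hnorxn : ∀ r, r ≠ r0 → C.reactants r s0 = 0)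
    (C' : CRN {s : S // s ≠ s0} {r : R // r ≠ r0})
    (hC'r : ∀ r s, C'.reactants r s = C.reactants r.1 s.1)
    (hC'p : ∀ r s, C'.products r s =
      C.products r.1 s.1 + C.products r.1 s0 * C.products r0 s.1)
    (u : R → ℝ) (x y : S → ℝ) (hx0 : 0 ≤ x s0) (h : C.StepWith u x y) :
    C'.StepWith (fun r => u r.1)
      (fun s => x s.1 + x s0 * C.products r0 s.1)
      (fun s => y s.1 + y s0 * C.products r0 s.1) := by
  obtain ⟨⟨hun, happ⟩, hyn, heq⟩ := h
  refine ⟨⟨fun r => hun r.1, ?_⟩, ?_, ?_⟩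
  · intro r hr s hs
    dsimp only
    rw [hC'r] at hs
    have hx : 0 < x s.1 := happ r.1 hr s.1 hs
    have : 0 ≤ x s0 * (C.products r0 s.1 : ℝ) :=
      mul_nonneg hx0 (Nat.cast_nonneg _)
    linarith
  · intro s
    dsimp only
    have : 0 ≤ y s0 * (C.products r0 s.1 : ℝ) :=
      mul_nonneg (hyn s0) (Nat.cast_nonneg _)
    have := hyn s.1
    linarith
  · intro s
    have hnet : ∀ r : {r : R // r ≠ r0}, C'.net r s =
        C.net r.1 s.1 + (C.products r.1 s0 : ℝ) * (C.products r0 s.1 : ℝ) := by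
      intro r
      simp [CRN.net, hC'r, hC'p, Nat.cast_add, Nat.cast_mul]
      ring
    have h1 : ∑ r : {r : R // r ≠ r0}, u r.1 * C'.net r s =
        (∑ r : {r : R // r ≠ r0}, u r.1 * C.net r.1 s.1) +
        (∑ r : {r : R // r ≠ r0}, u r.1 * (C.products r.1 s0 : ℝ)) *
          (C.products r0 s.1 : ℝ) := by
      rw [Finset.sum_mul, ← Finset.sum_add_distrib]
      refine Finset.sum_congr rfl fun r _ => ?_
      rw [hnet r]; ring
    have h2 : (∑ r, u r * C.net r s.1) =
        u r0 * (C.products r0 s.1 : ℝ) +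
          ∑ r : {r : R // r ≠ r0}, u r.1 * C.net r.1 s.1 := by
      rw [sum_split r0]
      congr 1
      simp [CRN.net, honly s.1 s.2]
    have h3 : (∑ r, u r * C.net r s0) =
        -u r0 + ∑ r : {r : R // r ≠ r0}, u r.1 * (C.products r.1 s0 : ℝ) := by
      rw [sum_split r0]
      congr 1
      · simp [CRN.net, huni, hnoprod]
      · refine Finset.sum_congr rfl fun r _ => ?_
        simp [CRN.net, hnorxn r.1 r.2]
    dsimp only
    have hys := heq s.1
    have hys0 := heq s0
    rw [h2] at hys
    rw [h3] at hys0
    rw [h1, hys, hys0]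
    ring

private lemma reach_nonneg (C : CRN S R) (s0 : S) {a c : S → ℝ}
    (h : C.Reach a c) (ha : 0 ≤ a s0) : 0 ≤ c s0 := by
  induction h with
  | refl => exact ha
  | tail _ hstep _ => exact hstep.choose_spec.2.1 s0

private lemma reach_lemma (C : CRN S R) (s0 : S) (r0 : R)
    (huni : C.reactants r0 s0 = 1)
    (honly : ∀ s, s ≠ s0 → C.reactants r0 s = 0)
    (hnoprod : C.products r0 s0 = 0)
    (hnorxn : ∀ r, r ≠ r0 → C.reactants r s0 = 0)
    (C' : CRN {s : S // s ≠ s0} {r : R // r ≠ r0})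
    (hC'r : ∀ r s, C'.reactants r s = C.reactants r.1 s.1)
    (hC'p : ∀ r s, C'.products r s =
      C.products r.1 s.1 + C.products r.1 s0 * C.products r0 s.1)
    {a b : S → ℝ} (ha : 0 ≤ a s0) (h : C.Reach a b) :
    C'.Reach (fun s => a s.1 + a s0 * C.products r0 s.1)
      (fun s => b s.1 + b s0 * C.products r0 s.1) := by
  induction h with
  | refl => exact Relation.ReflTransGen.refl
  | tail hac hstep ih =>
    refine ih.tail ?_
    obtain ⟨u, hu⟩ := hstep
    exact ⟨fun r => u r.1, step_lemma C s0 r0 huni honly hnoprod hnorxn C' hC'r hC'p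
      u _ _ (reach_nonneg C s0 hac ha) hu⟩

end Aux

/-- Unimolecular reaction elimination preserves reachability in non-competitive
CRNs: if `r0` is unimolecular with sole reactant `s0`, `s0` is a reactant in no
other reaction, `a(s0) = b(s0) = 0`, `a → b` and `b` is static, then in the
optimized CRN (obtained by deleting `r0` and `s0` and replacing each unit of
`s0` among the products of any reaction by the products of `r0`), the
projection of `a` line-segment reaches the projection of `b`. -/


theorem stmt18 {S R : Type} [Fintype S] [Fintype R] [DecidableEq S] [DecidableEq R]
    (C : CRN S R) (hnc : C.NonCompetitive) (s0 : S) (r0 : R)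
    (huni : C.reactants r0 s0 = 1)
    (honly : ∀ s, s ≠ s0 → C.reactants r0 s = 0)
    (hnoprod : C.products r0 s0 = 0)
    (hnorxn : ∀ r, r ≠ r0 → C.reactants r s0 = 0)
    (a b : S → ℝ) (ha0 : a s0 = 0) (hb0 : b s0 = 0)
    (hreach : C.Reach a b) (hstatic : C.Static b)
    (C' : CRN {s : S // s ≠ s0} {r : R // r ≠ r0})
    (hC'r : ∀ r s, C'.reactants r s = C.reactants r.1 s.1)
    (hC'p : ∀ r s, C'.products r s =
      C.products r.1 s.1 + C.products r.1 s0 * C.products r0 s.1) :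
    C'.Reach (fun s => a s.1) (fun s => b s.1) := by
  have h := reach_lemma C s0 r0 huni honly hnoprod hnorxn C' hC'r hC'p
    (a := a) (b := b) (le_of_eq ha0.symm) hreach
  simpa [ha0, hb0] using h
end
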